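/- arXiv:1807.00204 — 7 statements merged into one kernel-verified Lean document; each statement's English description precedes it below -/
import Mathlib

section
/- The function g(x) = x·M(x)^{2/x} is strictly convex on (0,∞). -/
/-!
With `f = 2 log M`, which is strictly convex, `g x = x * exp (f x / x)`. The map
`(x, u) ↦ x * exp (u / x)` is the perspective of `exp`, hence jointly convex on `x > 0`, and it
is strictly increasing in `u`; composing it with the strictly convex `x ↦ (x, f x)` gives a
strictly convex function.
-/

open Real Set

theorem convexOn_mul_exp_div :
    ConvexOn ℝ (Ioi 0 ×ˢ univ) (fun p : ℝ × ℝ => p.1 * exp (p.2 / p.1)) := by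
  refine ⟨(convex_Ioi 0).prod convex_univ, ?_⟩
  rintro ⟨x, u⟩ ⟨hx, -⟩ ⟨y, v⟩ ⟨hy, -⟩ a b ha hb hab
  simp only [mem_Ioi] at hx hy
  simp only [Prod.smul_mk, Prod.mk_add_mk, smul_eq_mul]
  have hz : 0 < a * x + b * y := by
    simpa only [smul_eq_mul, mem_Ioi] using convex_Ioi (0 : ℝ) hx hy ha hb hab
  set z := a * x + b * y
  -- the weights `a x / z` and `b y / z` turn the claim into convexity of `exp`
  have key := convexOn_exp.2 (mem_univ (u / x)) (mem_univ (v / y))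
    (div_nonneg (mul_nonneg ha hx.le) hz.le) (div_nonneg (mul_nonneg hb hy.le) hz.le)
    (by rw [← add_div, div_self hz.ne'])
  have hw : a * x / z * (u / x) + b * y / z * (v / y) = (a * u + b * v) / z := by
    field_simp
  rw [smul_eq_mul, smul_eq_mul, hw] at key
  calc z * exp ((a * u + b * v) / z)
      ≤ z * (a * x / z * exp (u / x) + b * y / z * exp (v / y)) :=
        mul_le_mul_of_nonneg_left key hz.le
    _ = a * (x * exp (u / x)) + b * (y * exp (v / y)) := by field_simp

theorem StrictConvexOn.mul_exp_div {s : Set ℝ} {f : ℝ → ℝ} (hs : s ⊆ Ioi 0)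
    (hf : StrictConvexOn ℝ s f) : StrictConvexOn ℝ s (fun x => x * exp (f x / x)) := by
  refine ⟨hf.1, fun x hx y hy hxy a b ha hb hab => ?_⟩
  have hz : 0 < a • x + b • y := hs (hf.1 hx hy ha.le hb.le hab)
  calc (a • x + b • y) * exp (f (a • x + b • y) / (a • x + b • y))
      < (a • x + b • y) * exp ((a • f x + b • f y) / (a • x + b • y)) := by
        gcongr
        exact hf.2 hx hy hxy ha hb hab
    _ ≤ a • (x * exp (f x / x)) + b • (y * exp (f y / y)) := by
        simpa using convexOn_mul_exp_div.2 (⟨hs hx, mem_univ (f x)⟩ : (x, f x) ∈ Ioi 0 ×ˢ univ)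
          (⟨hs hy, mem_univ (f y)⟩ : (y, f y) ∈ Ioi 0 ×ˢ univ) ha.le hb.le hab

theorem strictConvexOn_g_general (M g : ℝ → ℝ)
    (hMpos : ∀ x > (0 : ℝ), 0 < M x)
    (hMsmooth : ContDiffOn ℝ 2 M (Set.Ioi 0))
    (hlogconv : ∀ x > (0 : ℝ), 0 < deriv (deriv (fun y => Real.log (M y))) x)
    (hg : ∀ x > (0 : ℝ), g x = x * M x ^ (2 / x)) :
    StrictConvexOn ℝ (Set.Ioi 0) g := by
  have hlogM : StrictConvexOn ℝ (Ioi 0) (fun x => 2 * log (M x)) := by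
    refine strictConvexOn_of_deriv2_pos (convex_Ioi 0)
      (continuousOn_const.mul (hMsmooth.continuousOn.log fun x hx => (hMpos x hx).ne')) ?_
    intro x hx
    rw [interior_Ioi] at hx
    simpa only [Function.iterate_succ, Function.iterate_zero, Function.comp_id,
      Function.comp_apply, deriv_const_mul_field', id] using mul_pos two_pos (hlogconv x hx)
  refine (hlogM.mul_exp_div subset_rfl).congr fun x hx => ?_
  rw [hg x hx, rpow_def_of_pos (hMpos x hx), mul_comm (log (M x)),
    div_mul_eq_mul_div]

/-- The function `g(x) = x·M(x)^{2/x}` is strictly convex on `(0,∞)`.  Here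
`M : (0,∞) → (0,∞)` is `C²` with `(log M)'' > 0` (so `log M` is strictly convex),
`J(x) = M(x)^{1/x}`, and `J` is unbounded on `(0,∞)`. -/
theorem strictConvexOn_g (M J g : ℝ → ℝ)
    (hMpos : ∀ x > (0 : ℝ), 0 < M x)
    (hMsmooth : ContDiffOn ℝ 2 M (Set.Ioi 0))
    (hlogconv : ∀ x > (0 : ℝ), 0 < deriv (deriv (fun y => Real.log (M y))) x)
    (hJ : ∀ x > (0 : ℝ), J x = M x ^ (1 / x))
    (hJunb : ∀ B : ℝ, ∃ x > (0 : ℝ), B < J x)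
    (hg : ∀ x > (0 : ℝ), g x = x * M x ^ (2 / x)) :
    StrictConvexOn ℝ (Set.Ioi 0) g :=
  strictConvexOn_g_general M g hMpos hMsmooth hlogconv hg
end

section
/- The function g is strictly increasing on [x₀,∞); denoting by g⁻¹ the inverse of its restriction to [x₀,∞) (defined on [g(x₀),∞)), for every y ≥ 1 and every k ≥ g(x₀) one has (1/y)·g⁻¹(k·y) ≤ g⁻¹(2k). -/
/-! Since `g x / x = J x ^ 2` is positive and nondecreasing on `[x₀, ∞)`, `g` is the product of the
strictly increasing `x` with a positive nondecreasing factor, hence strictly increasing. The same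
monotonicity gives `g (a / y) ≤ g a / y` for `y ≥ 1`; applied to `a = g⁻¹ (k y)` this reads
`g (a / y) ≤ k ≤ 2 k = g (g⁻¹ (2 k))`, and monotonicity of `g` yields the scaling inequality. -/

open Set

lemma continuousOn_rpow_one_div {M : ℝ → ℝ} {s : Set ℝ} (hM : ContinuousOn M s)
    (hMpos : ∀ x ∈ s, 0 < M x) (hs : ∀ x ∈ s, x ≠ 0) :
    ContinuousOn (fun x => M x ^ (1 / x)) s :=
  hM.rpow (continuousOn_const.div continuousOn_id hs) fun x hx => Or.inl (hMpos x hx).ne'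

section RatioMonotone

variable {g : ℝ → ℝ} {x₀ : ℝ}

lemma strictMonoOn_of_monotoneOn_div (hx₀ : 0 < x₀)
    (hratio : MonotoneOn (fun x => g x / x) (Ici x₀)) (hpos : ∀ x ∈ Ici x₀, 0 < g x) :
    StrictMonoOn g (Ici x₀) := by
  intro a ha b hb hab
  have ha0 : 0 < a := hx₀.trans_le ha
  calc g a = a * (g a / a) := by field_simp
    _ < b * (g a / a) := mul_lt_mul_of_pos_right hab (div_pos (hpos a ha) ha0)
    _ ≤ b * (g b / b) := mul_le_mul_of_nonneg_left (hratio ha hb hab.le) (ha0.trans hab).le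
    _ = g b := by field_simp [(ha0.trans hab).ne']

lemma map_div_le_div_map_of_monotoneOn_div (hx₀ : 0 < x₀)
    (hratio : MonotoneOn (fun x => g x / x) (Ici x₀)) {a y : ℝ} (hay : a / y ∈ Ici x₀)
    (hy : 1 ≤ y) : g (a / y) ≤ g a / y := by
  have hy0 : 0 < y := one_pos.trans_le hy
  have hay0 : 0 < a / y := hx₀.trans_le hay
  have ha0 : 0 < a := by simpa [hy0] using hay0
  have hle : g (a / y) / (a / y) ≤ g a / a :=
    hratio hay (hay.trans (div_le_self ha0.le hy)) (div_le_self ha0.le hy)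
  calc g (a / y) = a / y * (g (a / y) / (a / y)) := by field_simp
    _ ≤ a / y * (g a / a) := mul_le_mul_of_nonneg_left hle hay0.le
    _ = g a / y := by field_simp

lemma div_le_of_map_div_le (hx₀ : 0 < x₀) (hmono : StrictMonoOn g (Ici x₀))
    (hratio : MonotoneOn (fun x => g x / x) (Ici x₀)) {a b y : ℝ} (hb : b ∈ Ici x₀)
    (hy : 1 ≤ y) (h : g a / y ≤ g b) : a / y ≤ b := by
  rcases le_or_gt (a / y) x₀ with hle | hgt
  · exact hle.trans hb
  · have hay : a / y ∈ Ici x₀ := hgt.le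
    exact (hmono.le_iff_le hay hb).1
      ((map_div_le_div_map_of_monotoneOn_div hx₀ hratio hay hy).trans h)

end RatioMonotone

theorem strictMonoOn_g_and_inverse_scaling_general (M J g : ℝ → ℝ)
    (hMpos : ∀ x > (0 : ℝ), 0 < M x)
    (hMsmooth : ContDiffOn ℝ 2 M (Set.Ioi 0))
    (hJ : ∀ x > (0 : ℝ), J x = M x ^ (1 / x))
    (hg : ∀ x > (0 : ℝ), g x = x * M x ^ (2 / x))
    (x₀ : ℝ) (hx₀ : 0 < x₀) (hJ' : ∀ x > x₀, 0 < deriv J x)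
    (ginv : ℝ → ℝ)
    (hginv_right : ∀ y ∈ Set.Ici (g x₀), ginv y ∈ Set.Ici x₀ ∧ g (ginv y) = y) :
    StrictMonoOn g (Set.Ici x₀) ∧
    ∀ y ≥ (1 : ℝ), ∀ k ≥ g x₀, (1 / y) * ginv (k * y) ≤ ginv (2 * k) := by
  have hsub : Ici x₀ ⊆ Ioi 0 := Ici_subset_Ioi.2 hx₀
  have hJpos : ∀ x ∈ Ici x₀, 0 < J x := fun x hx => by
    rw [hJ x (hsub hx)]; exact Real.rpow_pos_of_pos (hMpos x (hsub hx)) _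
  have hJmono : StrictMonoOn J (Ici x₀) := by
    refine strictMonoOn_of_deriv_pos (convex_Ici x₀) ?_ (by simpa using hJ')
    exact (continuousOn_rpow_one_div (hMsmooth.continuousOn.mono hsub)
      (fun x hx => hMpos x (hsub hx)) fun x hx => (hsub hx).ne').congr fun x hx => hJ x (hsub hx)
  have hratio_eq : ∀ x ∈ Ici x₀, g x / x = J x ^ 2 := fun x hx => by
    have hx0 : 0 < x := hsub hx
    rw [hg x hx0, hJ x hx0, mul_div_cancel_left₀ _ hx0.ne',
      ← Real.rpow_mul_natCast (hMpos x hx0).le]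
    ring_nf
  have hratio : MonotoneOn (fun x => g x / x) (Ici x₀) := fun a ha b hb hab => by
    simp only [hratio_eq a ha, hratio_eq b hb]
    exact pow_le_pow_left₀ (hJpos a ha).le (hJmono.monotoneOn ha hb hab) 2
  have hgpos : ∀ x ∈ Ici x₀, 0 < g x := fun x hx => by
    have := hratio_eq x hx ▸ pow_pos (hJpos x hx) 2
    exact (div_pos_iff_of_pos_right (hsub hx)).1 this
  have hgmono := strictMonoOn_of_monotoneOn_div hx₀ hratio hgpos
  refine ⟨hgmono, fun y hy k hk => ?_⟩
  have hk0 : 0 ≤ k := (hgpos x₀ self_mem_Ici).le.trans hk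
  obtain ⟨-, hga⟩ := hginv_right (k * y) (hk.trans (le_mul_of_one_le_right hk0 hy))
  obtain ⟨hb, hgb⟩ := hginv_right (2 * k) (hk.trans (by linarith))
  rw [one_div_mul_eq_div]
  refine div_le_of_map_div_le hx₀ hgmono hratio hb hy ?_
  rw [hga, hgb, mul_div_cancel_right₀ k (one_pos.trans_le hy).ne']
  linarith

/-- The function `g` is strictly increasing on `[x₀,∞)`; denoting by `g⁻¹` the inverse of
its restriction to `[x₀,∞)` (defined on `[g(x₀),∞)`), for every `y ≥ 1` and every
`k ≥ g(x₀)` one has `(1/y)·g⁻¹(k·y) ≤ g⁻¹(2k)`.  Here `M : (0,∞) → (0,∞)` is `C²` with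
`(log M)'' > 0`, `J(x) = M(x)^{1/x}` is unbounded, `g(x) = x·M(x)^{2/x}`, and `x₀ > 0`
is such that `J' > 0` on `(x₀,∞)`. -/
theorem strictMonoOn_g_and_inverse_scaling (M J g : ℝ → ℝ)
    (hMpos : ∀ x > (0 : ℝ), 0 < M x)
    (hMsmooth : ContDiffOn ℝ 2 M (Set.Ioi 0))
    (hlogconv : ∀ x > (0 : ℝ), 0 < deriv (deriv (fun y => Real.log (M y))) x)
    (hJ : ∀ x > (0 : ℝ), J x = M x ^ (1 / x))
    (hJunb : ∀ B : ℝ, ∃ x > (0 : ℝ), B < J x)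
    (hg : ∀ x > (0 : ℝ), g x = x * M x ^ (2 / x))
    (x₀ : ℝ) (hx₀ : 0 < x₀) (hJ' : ∀ x > x₀, 0 < deriv J x)
    (ginv : ℝ → ℝ)
    (hginv_left : ∀ x ∈ Set.Ici x₀, ginv (g x) = x)
    (hginv_right : ∀ y ∈ Set.Ici (g x₀), ginv y ∈ Set.Ici x₀ ∧ g (ginv y) = y) :
    StrictMonoOn g (Set.Ici x₀) ∧
    ∀ y ≥ (1 : ℝ), ∀ k ≥ g x₀, (1 / y) * ginv (k * y) ≤ ginv (2 * k) :=
  strictMonoOn_g_and_inverse_scaling_general M J g hMpos hMsmooth hJ hg x₀ hx₀ hJ' ginv hginv_right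
end

section
/- Let ε₁ ∈ (0,1). There exists a constant C(ε₁) > 0 depending only on ε₁ (for instance C(ε₁) = (4/ε₁²)·max{1, log(1/ε₁)}) such that for every k > x₀²·J(x₀)·J'(x₀)·e^{2·x₀·J'(x₀)/J(x₀)} with k ≥ 2·g(x₀)·log(1/ε₁)/ε₁²: if the critical point ε(k) of h satisfies ε(k) > ε₁, then h(ε₁) ≤ h(ε(k)) ≤ C(ε₁)·h(ε₁). -/
/-!
Write `f = log M`, `N(ε) = g⁻¹(k ε² / log(1/ε))` and `ψ(x) = x f'(x) - f(x)` (`legendreAt f x`,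
the Legendre transform of `f` at the slope `f'(x)`); `ψ' = x f'' > 0`. Differentiating
`g(N(ε)) = k ε² / log(1/ε)` shows that `h'(ε)` is a positive multiple of `h(ε) - ψ(N(ε))`.
At a maximum point `w` of `h` on `[ε₁, ε(k)]` we have `h'(w) ≤ 0`, hence
`h(ε₁) ≤ h(w) ≤ ψ(N(w)) ≤ ψ(N(ε(k))) = h(ε(k))`. For the upper bound, `h(ε) J(N(ε))² = k ε²`
and `J ∘ N` is increasing, so `h(ε(k)) ≤ k / J(N(ε₁))² = ε₁⁻² h(ε₁)`.
-/

open Real Set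

noncomputable def legendreAt (f : ℝ → ℝ) (x : ℝ) : ℝ := x * deriv f x - f x

lemma monotoneOn_legendreAt {f : ℝ → ℝ} (hf : DifferentiableOn ℝ f (Ioi 0))
    (hf'' : ∀ x > 0, 0 < deriv (deriv f) x) : MonotoneOn (legendreAt f) (Ioi 0) := by
  have hderiv : ∀ x > 0, HasDerivAt (legendreAt f) (x * deriv (deriv f) x) x := by
    intro x hx
    have hf' := (differentiableAt_of_deriv_ne_zero (hf'' x hx).ne').hasDerivAt
    have hfx := (hf.differentiableAt (Ioi_mem_nhds hx)).hasDerivAt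
    exact (((hasDerivAt_id' x).mul hf').sub hfx).congr_deriv (by ring)
  refine monotoneOn_of_hasDerivWithinAt_nonneg (f' := fun x => x * deriv (deriv f) x) (convex_Ioi 0)
    (fun x hx => (hderiv x hx).continuousAt.continuousWithinAt) (fun x hx => ?_) (fun x hx => ?_)
  · rw [interior_Ioi] at hx
    exact (hderiv x hx).hasDerivWithinAt
  · rw [interior_Ioi] at hx
    exact (mul_pos hx (hf'' x hx)).le

lemma hasDerivAt_exp_div_self {f : ℝ → ℝ} {x : ℝ} (hf : DifferentiableAt ℝ f x) (hx : x ≠ 0) :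
    HasDerivAt (fun y => exp (f y / y)) (exp (f x / x) * (legendreAt f x / x ^ 2)) x := by
  refine (hf.hasDerivAt.div (hasDerivAt_id' x) hx).exp.congr_deriv ?_
  simp only [legendreAt, Pi.div_apply]
  field_simp

section ExpDiv

variable {f J g : ℝ → ℝ} {x₀ : ℝ}

lemma hasDerivAt_of_eq_exp_div (hf : DifferentiableOn ℝ f (Ioi 0))
    (hJf : ∀ x > 0, J x = exp (f x / x)) {x : ℝ} (hx : 0 < x) :
    HasDerivAt J (J x * (legendreAt f x / x ^ 2)) x := by
  rw [hJf x hx]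
  refine HasDerivAt.congr_of_eventuallyEq
    (hasDerivAt_exp_div_self (hf.differentiableAt (Ioi_mem_nhds hx)) hx.ne') ?_
  filter_upwards [Ioi_mem_nhds hx] with y hy using hJf y hy

lemma legendreAt_pos_of_deriv_pos (hf : DifferentiableOn ℝ f (Ioi 0))
    (hJf : ∀ x > 0, J x = exp (f x / x)) {x : ℝ} (hx : 0 < x) (hJ' : 0 < deriv J x) :
    0 < legendreAt f x := by
  rw [(hasDerivAt_of_eq_exp_div hf hJf hx).deriv, hJf x hx] at hJ'
  have := pos_of_mul_pos_right hJ' (exp_pos _).le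
  exact (div_pos_iff_of_pos_right (by positivity)).1 this

lemma strictMonoOn_of_eq_exp_div (hf : DifferentiableOn ℝ f (Ioi 0))
    (hJf : ∀ x > 0, J x = exp (f x / x)) (hx₀ : 0 < x₀) (hJ' : ∀ x > x₀, 0 < deriv J x) :
    StrictMonoOn J (Ici x₀) := by
  refine strictMonoOn_of_deriv_pos (convex_Ici x₀) (fun x hx => ?_) (fun x hx => ?_)
  · exact (hasDerivAt_of_eq_exp_div hf hJf (hx₀.trans_le hx)).continuousAt.continuousWithinAt
  · rw [interior_Ici] at hx
    exact hJ' x hx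

lemma hasDerivAt_mul_sq_of_eq_exp_div (hf : DifferentiableOn ℝ f (Ioi 0))
    (hJf : ∀ x > 0, J x = exp (f x / x)) (hgJ : ∀ x > 0, g x = x * J x ^ 2) {x : ℝ}
    (hx : 0 < x) : HasDerivAt g (g x * (x + 2 * legendreAt f x) / x ^ 2) x := by
  have hg : HasDerivAt g _ x :=
    ((hasDerivAt_id' x).mul ((hasDerivAt_of_eq_exp_div hf hJf hx).pow 2)).congr_of_eventuallyEq
      (by filter_upwards [Ioi_mem_nhds hx] with y hy using hgJ y hy)
  refine hg.congr_deriv ?_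
  rw [hgJ x hx, Pi.pow_apply]
  field_simp
  ring

lemma strictMonoOn_of_eq_mul_sq (hf : DifferentiableOn ℝ f (Ioi 0))
    (hJf : ∀ x > 0, J x = exp (f x / x)) (hgJ : ∀ x > 0, g x = x * J x ^ 2) (hx₀ : 0 < x₀)
    (hJ' : ∀ x > x₀, 0 < deriv J x) : StrictMonoOn g (Ici x₀) := by
  intro a ha b hb hab
  have ha₀ : 0 < a := hx₀.trans_le ha
  have hJa : 0 < J a := hJf a ha₀ ▸ exp_pos _
  have hJab := strictMonoOn_of_eq_exp_div hf hJf hx₀ hJ' ha hb hab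
  rw [hgJ a ha₀, hgJ b (hx₀.trans_le hb)]
  exact mul_lt_mul'' hab (pow_lt_pow_left₀ hJab hJa.le two_ne_zero) ha₀.le (by positivity)

end ExpDiv

section RightInverse

variable {g ginv : ℝ → ℝ} {a : ℝ}

lemma lt_of_rightInvOn (hinv : ∀ y ∈ Ici (g a), ginv y ∈ Ici a ∧ g (ginv y) = y) {y : ℝ}
    (hy : g a < y) : a < ginv y := by
  refine (hinv y hy.le).1.lt_of_ne fun h => ?_
  have := (hinv y hy.le).2
  rw [← h] at this
  exact hy.ne this

lemma monotoneOn_of_rightInvOn (hmono : StrictMonoOn g (Ici a))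
    (hinv : ∀ y ∈ Ici (g a), ginv y ∈ Ici a ∧ g (ginv y) = y) : MonotoneOn ginv (Ici (g a)) := by
  intro y hy z hz hyz
  by_contra! hlt
  have := hmono (hinv z hz).1 (hinv y hy).1 hlt
  rw [(hinv y hy).2, (hinv z hz).2] at this
  exact hyz.not_gt this

lemma continuousAt_of_rightInvOn (hmono : StrictMonoOn g (Ici a))
    (hinv : ∀ y ∈ Ici (g a), ginv y ∈ Ici a ∧ g (ginv y) = y) {y : ℝ} (hy : g a < y) :
    ContinuousAt ginv y := by
  refine continuousAt_of_monotoneOn_of_image_mem_nhds (monotoneOn_of_rightInvOn hmono hinv)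
    (Ici_mem_nhds hy) (Filter.mem_of_superset (Ici_mem_nhds (lt_of_rightInvOn hinv hy))
      fun x hx => ?_)
  refine ⟨g x, hmono.monotoneOn self_mem_Ici hx hx, ?_⟩
  have hgx := hinv (g x) (hmono.monotoneOn self_mem_Ici hx hx)
  exact hmono.injOn hgx.1 hx hgx.2

lemma hasDerivAt_of_rightInvOn (hmono : StrictMonoOn g (Ici a))
    (hinv : ∀ y ∈ Ici (g a), ginv y ∈ Ici a ∧ g (ginv y) = y) {y g' : ℝ} (hy : g a < y)
    (hg : HasDerivAt g g' (ginv y)) (hg' : g' ≠ 0) : HasDerivAt ginv g'⁻¹ y :=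
  hg.of_local_left_inverse (continuousAt_of_rightInvOn hmono hinv hy) hg' <| by
    filter_upwards [Ici_mem_nhds hy] with z hz using (hinv z hz).2

end RightInverse

lemma monotoneOn_mul_sq_div_log_inv {k : ℝ} (hk : 0 ≤ k) :
    MonotoneOn (fun ε => k * ε ^ 2 / log (1 / ε)) (Ioo 0 1) := by
  rintro a ⟨ha₀, -⟩ b ⟨hb₀, hb₁⟩ hab
  have hlogb : 0 < log (1 / b) := log_pos ((one_lt_div hb₀).2 hb₁)
  dsimp only
  gcongr

section CriticalPoint

variable {g ginv ψ : ℝ → ℝ} {x₀ : ℝ}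

lemma exists_pos_hasDerivAt_eq_mul_sub (hx₀ : 0 < x₀) (hψ : ∀ x > x₀, 0 < ψ x)
    (hg' : ∀ x > x₀, HasDerivAt g (g x * (x + 2 * ψ x) / x ^ 2) x)
    (hmono : StrictMonoOn g (Ici x₀))
    (hinv : ∀ y ∈ Ici (g x₀), ginv y ∈ Ici x₀ ∧ g (ginv y) = y) {k ε : ℝ} (hk : 0 < k)
    (hε : ε ∈ Ioo 0 1) (hu : g x₀ < k * ε ^ 2 / log (1 / ε)) :
    ∃ c > 0, HasDerivAt (fun ε => ginv (k * ε ^ 2 / log (1 / ε)) * log (1 / ε))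
      (c * (ginv (k * ε ^ 2 / log (1 / ε)) * log (1 / ε) - ψ (ginv (k * ε ^ 2 / log (1 / ε)))))
      ε := by
  obtain ⟨hε0, hε1⟩ := hε
  have hL : 0 < log (1 / ε) := log_pos ((one_lt_div hε0).2 hε1)
  have hN : 0 < ginv (k * ε ^ 2 / log (1 / ε)) := hx₀.trans (lt_of_rightInvOn hinv hu)
  have hgN := (hinv _ hu.le).2
  have hψN := hψ _ (lt_of_rightInvOn hinv hu)
  have hlog : HasDerivAt (fun ε => log (1 / ε)) (-ε⁻¹) ε :=
    (hasDerivAt_log hε0.ne').neg.congr_of_eventuallyEq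
      (.of_forall fun y => by simp only [one_div, log_inv, Pi.neg_apply])
  have hu' : HasDerivAt (fun ε => k * ε ^ 2 / log (1 / ε))
      (k * ε ^ 2 / log (1 / ε) * (2 * log (1 / ε) + 1) / (ε * log (1 / ε))) ε := by
    refine (((hasDerivAt_pow 2 ε).const_mul k).div hlog hL.ne').congr_deriv ?_
    field_simp
    ring
  have hg'N := hg' _ (lt_of_rightInvOn hinv hu)
  rw [hgN] at hg'N
  have hN' : HasDerivAt (fun ε => ginv (k * ε ^ 2 / log (1 / ε))) _ ε :=
    (hasDerivAt_of_rightInvOn hmono hinv hu hg'N (by positivity)).comp ε hu'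
  refine ⟨2 * ginv (k * ε ^ 2 / log (1 / ε)) /
    (ε * (ginv (k * ε ^ 2 / log (1 / ε)) + 2 * ψ (ginv (k * ε ^ 2 / log (1 / ε))))),
    by positivity, (hN'.mul hlog).congr_deriv ?_⟩
  generalize ginv (k * ε ^ 2 / log (1 / ε)) = N at hN hψN ⊢
  field_simp
  ring

lemma ginv_mul_log_inv_mul_sq {J : ℝ → ℝ} (hx₀ : 0 < x₀) (hgJ : ∀ x > 0, g x = x * J x ^ 2)
    (hinv : ∀ y ∈ Ici (g x₀), ginv y ∈ Ici x₀ ∧ g (ginv y) = y) {k ε : ℝ} (hε : ε ∈ Ioo 0 1)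
    (hu : g x₀ < k * ε ^ 2 / log (1 / ε)) :
    ginv (k * ε ^ 2 / log (1 / ε)) * log (1 / ε) * J (ginv (k * ε ^ 2 / log (1 / ε))) ^ 2 =
      k * ε ^ 2 := by
  have hL : 0 < log (1 / ε) := log_pos ((one_lt_div hε.1).2 hε.2)
  rw [mul_right_comm, ← hgJ _ (hx₀.trans (lt_of_rightInvOn hinv hu)),
    (hinv _ hu.le).2]
  field_simp

end CriticalPoint

lemma le_of_hasDerivAt_mul_sub_of_deriv_eq_zero {h φ : ℝ → ℝ} {a b : ℝ} (hab : a ≤ b)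
    (hφ : MonotoneOn φ (Icc a b)) (hh : ∀ x ∈ Icc a b, ∃ c > 0, HasDerivAt h (c * (h x - φ x)) x)
    (hb : deriv h b = 0) : h a ≤ h b := by
  have hsign : ∀ x ∈ Icc a b, deriv h x ≤ 0 → h x ≤ φ x := fun x hx hd => by
    obtain ⟨c, hc, hder⟩ := hh x hx
    rw [hder.deriv] at hd
    exact sub_nonpos.1 (nonpos_of_mul_nonpos_right hd hc)
  have hbφ : φ b ≤ h b := by
    obtain ⟨c, hc, hder⟩ := hh b (right_mem_Icc.2 hab)
    rw [hder.deriv] at hb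
    exact sub_eq_zero.1 ((mul_eq_zero.1 hb).resolve_left hc.ne') |>.ge
  obtain ⟨w, hw, hmax⟩ := isCompact_Icc.exists_isMaxOn (nonempty_Icc.2 hab) fun x hx =>
    (hh x hx).choose_spec.2.continuousAt.continuousWithinAt
  have hw' : deriv h w ≤ 0 := by
    rcases hw.2.eq_or_lt with rfl | hwb
    · exact hb.le
    obtain ⟨c, -, hder⟩ := hh w hw
    have hcone : b - w ∈ posTangentConeAt (Icc a b) w :=
      sub_mem_posTangentConeAt_of_segment_subset
        ((segment_eq_Icc hwb.le).trans_subset (Icc_subset_Icc hw.1 le_rfl))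
    have := hmax.localize.hasFDerivWithinAt_nonpos hder.hasDerivWithinAt.hasFDerivWithinAt hcone
    rw [ContinuousLinearMap.toSpanSingleton_apply, smul_eq_mul] at this
    rw [hder.deriv]
    exact nonpos_of_mul_nonpos_right this (sub_pos.2 hwb)
  calc h a ≤ h w := hmax (left_mem_Icc.2 hab)
    _ ≤ φ w := hsign w hw hw'
    _ ≤ φ b := hφ hw (right_mem_Icc.2 hab) hw.2
    _ ≤ h b := hbφ

section Profile

variable {f J g ginv : ℝ → ℝ} {x₀ k ε₁ ε₂ : ℝ}

lemma lt_mul_sq_div_log_inv_of_mem_Icc {y : ℝ} (hk : 0 ≤ k) (hε₁ : 0 < ε₁) (hε₂ : ε₂ < 1)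
    (hu : y < k * ε₁ ^ 2 / log (1 / ε₁)) : ∀ ε ∈ Icc ε₁ ε₂, y < k * ε ^ 2 / log (1 / ε) :=
  fun _ hε => hu.trans_le <| monotoneOn_mul_sq_div_log_inv hk
    ⟨hε₁, hε.1.trans_lt (hε.2.trans_lt hε₂)⟩ ⟨hε₁.trans_le hε.1, hε.2.trans_lt hε₂⟩ hε.1

lemma monotoneOn_ginv_mul_sq_div_log_inv (hgmono : StrictMonoOn g (Ici x₀))
    (hinv : ∀ y ∈ Ici (g x₀), ginv y ∈ Ici x₀ ∧ g (ginv y) = y) (hk : 0 ≤ k) (hε₁ : 0 < ε₁)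
    (hε₂ : ε₂ < 1) (hu : g x₀ < k * ε₁ ^ 2 / log (1 / ε₁)) :
    MonotoneOn (fun ε => ginv (k * ε ^ 2 / log (1 / ε))) (Icc ε₁ ε₂) :=
  (monotoneOn_of_rightInvOn hgmono hinv).comp
    ((monotoneOn_mul_sq_div_log_inv hk).mono fun _ hε => ⟨hε₁.trans_le hε.1, hε.2.trans_lt hε₂⟩)
    fun ε hε => (lt_mul_sq_div_log_inv_of_mem_Icc hk hε₁ hε₂ hu ε hε).le

lemma ginv_mul_log_inv_le_inv_sq_mul (hx₀ : 0 < x₀) (hgJ : ∀ x > 0, g x = x * J x ^ 2)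
    (hJpos : ∀ x > 0, 0 < J x) (hJmono : MonotoneOn J (Ici x₀)) (hgmono : StrictMonoOn g (Ici x₀))
    (hinv : ∀ y ∈ Ici (g x₀), ginv y ∈ Ici x₀ ∧ g (ginv y) = y) (hk : 0 < k) (hε₁ : 0 < ε₁)
    (hε₁₂ : ε₁ ≤ ε₂) (hε₂ : ε₂ < 1) (hu : g x₀ < k * ε₁ ^ 2 / log (1 / ε₁)) :
    ginv (k * ε₂ ^ 2 / log (1 / ε₂)) * log (1 / ε₂) ≤
      ε₁⁻¹ ^ 2 * (ginv (k * ε₁ ^ 2 / log (1 / ε₁)) * log (1 / ε₁)) := by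
  have hu₂ := lt_mul_sq_div_log_inv_of_mem_Icc hk.le hε₁ hε₂ hu ε₂ (right_mem_Icc.2 hε₁₂)
  have h₁ := ginv_mul_log_inv_mul_sq hx₀ hgJ hinv ⟨hε₁, hε₁₂.trans_lt hε₂⟩ hu
  have h₂ := ginv_mul_log_inv_mul_sq hx₀ hgJ hinv ⟨hε₁.trans_le hε₁₂, hε₂⟩ hu₂
  have hN₁ := lt_of_rightInvOn hinv hu
  have hJ₁ := hJpos _ (hx₀.trans hN₁)
  have hJ₁₂ := hJmono hN₁.le (lt_of_rightInvOn hinv hu₂).le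
    (monotoneOn_ginv_mul_sq_div_log_inv hgmono hinv hk.le hε₁ hε₂ hu
      (left_mem_Icc.2 hε₁₂) (right_mem_Icc.2 hε₁₂) hε₁₂)
  generalize ginv (k * ε₂ ^ 2 / log (1 / ε₂)) * log (1 / ε₂) = b at h₂ ⊢
  generalize ginv (k * ε₁ ^ 2 / log (1 / ε₁)) * log (1 / ε₁) = a at h₁ ⊢
  generalize J (ginv (k * ε₁ ^ 2 / log (1 / ε₁))) = A at h₁ hJ₁ hJ₁₂
  generalize J (ginv (k * ε₂ ^ 2 / log (1 / ε₂))) = B at h₂ hJ₁₂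
  have hB : 0 < B := hJ₁.trans_le hJ₁₂
  calc b = k * ε₂ ^ 2 / B ^ 2 := by rw [← h₂]; field_simp
    _ ≤ k / A ^ 2 :=
      div_le_div₀ hk.le (mul_le_of_le_one_right hk.le (pow_le_one₀ (by linarith) hε₂.le))
        (by positivity) (by gcongr)
    _ = ε₁⁻¹ ^ 2 * a := by
      field_simp
      linear_combination -h₁

lemma ginv_mul_log_inv_le_of_deriv_eq_zero (hf : DifferentiableOn ℝ f (Ioi 0))
    (hf'' : ∀ x > 0, 0 < deriv (deriv f) x) (hJf : ∀ x > 0, J x = exp (f x / x))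
    (hgJ : ∀ x > 0, g x = x * J x ^ 2) (hx₀ : 0 < x₀) (hJ' : ∀ x > x₀, 0 < deriv J x)
    (hgmono : StrictMonoOn g (Ici x₀))
    (hinv : ∀ y ∈ Ici (g x₀), ginv y ∈ Ici x₀ ∧ g (ginv y) = y) (hk : 0 < k) (hε₁ : 0 < ε₁)
    (hε₁₂ : ε₁ ≤ ε₂) (hε₂ : ε₂ < 1) (hu : g x₀ < k * ε₁ ^ 2 / log (1 / ε₁))
    (hcrit : deriv (fun ε => ginv (k * ε ^ 2 / log (1 / ε)) * log (1 / ε)) ε₂ = 0) :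
    ginv (k * ε₁ ^ 2 / log (1 / ε₁)) * log (1 / ε₁) ≤
      ginv (k * ε₂ ^ 2 / log (1 / ε₂)) * log (1 / ε₂) := by
  have hu' := lt_mul_sq_div_log_inv_of_mem_Icc hk.le hε₁ hε₂ hu
  refine le_of_hasDerivAt_mul_sub_of_deriv_eq_zero
    (φ := fun ε => legendreAt f (ginv (k * ε ^ 2 / log (1 / ε)))) hε₁₂ ?_ (fun ε hε => ?_) hcrit
  · exact (monotoneOn_legendreAt hf hf'').comp
      (monotoneOn_ginv_mul_sq_div_log_inv hgmono hinv hk.le hε₁ hε₂ hu)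
      fun ε hε => hx₀.trans (lt_of_rightInvOn hinv (hu' ε hε))
  · exact exists_pos_hasDerivAt_eq_mul_sub hx₀
      (fun x hx => legendreAt_pos_of_deriv_pos hf hJf (hx₀.trans hx) (hJ' x hx))
      (fun x hx => hasDerivAt_mul_sq_of_eq_exp_div hf hJf hgJ (hx₀.trans hx)) hgmono hinv hk
      ⟨hε₁.trans_le hε.1, hε.2.trans_lt hε₂⟩ (hu' ε hε)

end Profile

theorem h_at_critical_point_comparable_general (M J g : ℝ → ℝ)
    (hMpos : ∀ x > (0 : ℝ), 0 < M x)
    (hMsmooth : ContDiffOn ℝ 2 M (Set.Ioi 0))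
    (hlogconv : ∀ x > (0 : ℝ), 0 < deriv (deriv (fun y => Real.log (M y))) x)
    (hJ : ∀ x > (0 : ℝ), J x = M x ^ (1 / x))
    (hg : ∀ x > (0 : ℝ), g x = x * M x ^ (2 / x))
    (x₀ : ℝ) (hx₀ : 0 < x₀) (hJ' : ∀ x > x₀, 0 < deriv J x)
    (ginv : ℝ → ℝ)
    (hginv_right : ∀ y ∈ Set.Ici (g x₀), ginv y ∈ Set.Ici x₀ ∧ g (ginv y) = y)
    (ε₁ : ℝ) (hε₁ : ε₁ ∈ Set.Ioo (0 : ℝ) 1) :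
    ∃ C > (0 : ℝ), ∀ (k ε₀ εc : ℝ) (h : ℝ → ℝ),
      x₀ ^ 2 * J x₀ * deriv J x₀ * Real.exp (2 * x₀ * deriv J x₀ / J x₀) < k →
      2 * g x₀ * Real.log (1 / ε₁) / ε₁ ^ 2 ≤ k →
      ε₀ ∈ Set.Ioo (0 : ℝ) 1 →
      k * ε₀ ^ 2 / Real.log (1 / ε₀) = g x₀ →
      (∀ ε, h ε = ginv (k * ε ^ 2 / Real.log (1 / ε)) * Real.log (1 / ε)) →
      εc ∈ Set.Ioo ε₀ 1 →
      deriv h εc = 0 →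
      ε₁ < εc →
      h ε₁ ≤ h εc ∧ h εc ≤ C * h ε₁ := by
  have hf : DifferentiableOn ℝ (fun y => log (M y)) (Ioi 0) :=
    (hMsmooth.differentiableOn (by norm_num)).log fun x hx => (hMpos x hx).ne'
  have hJf : ∀ x > 0, J x = exp (log (M x) / x) := fun x hx => by
    rw [hJ x hx, rpow_def_of_pos (hMpos x hx), mul_one_div]
  have hgJ : ∀ x > 0, g x = x * J x ^ 2 := fun x hx => by
    rw [hg x hx, hJ x hx, ← rpow_natCast, ← rpow_mul (hMpos x hx).le]
    ring_nf
  have hJpos : ∀ x > 0, 0 < J x := fun x hx => hJf x hx ▸ exp_pos _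
  have hgmono := strictMonoOn_of_eq_mul_sq hf hJf hgJ hx₀ hJ'
  obtain ⟨hε₁0, hε₁1⟩ := hε₁
  refine ⟨ε₁⁻¹ ^ 2, by positivity, fun k ε₀ εc h _ hk _ _ hh hεc hcrit hlt => ?_⟩
  have hL₁ : 0 < log (1 / ε₁) := log_pos ((one_lt_div hε₁0).2 hε₁1)
  have hgx₀ : 0 < g x₀ := hgJ x₀ hx₀ ▸ mul_pos hx₀ (pow_pos (hJpos x₀ hx₀) 2)
  have hk0 : 0 < k := lt_of_lt_of_le (by positivity) hk
  have hu : g x₀ < k * ε₁ ^ 2 / log (1 / ε₁) := by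
    rw [lt_div_iff₀ hL₁]
    rw [div_le_iff₀ (by positivity)] at hk
    nlinarith
  obtain rfl : h = fun ε => ginv (k * ε ^ 2 / log (1 / ε)) * log (1 / ε) := funext hh
  exact ⟨ginv_mul_log_inv_le_of_deriv_eq_zero hf hlogconv hJf hgJ hx₀ hJ' hgmono hginv_right hk0
      hε₁0 hlt.le hεc.2 hu hcrit,
    ginv_mul_log_inv_le_inv_sq_mul hx₀ hgJ hJpos
      (strictMonoOn_of_eq_exp_div hf hJf hx₀ hJ').monotoneOn hgmono hginv_right hk0 hε₁0 hlt.le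
      hεc.2 hu⟩

/-- Let `ε₁ ∈ (0,1)`.  There exists a constant `C(ε₁) > 0` depending only on `ε₁` such
that for every `k > x₀²·J(x₀)·J'(x₀)·e^{2·x₀·J'(x₀)/J(x₀)}` with
`k ≥ 2·g(x₀)·log(1/ε₁)/ε₁²`: if the critical point `ε(k)` of `h` satisfies `ε(k) > ε₁`,
then `h(ε₁) ≤ h(ε(k)) ≤ C(ε₁)·h(ε₁)`. -/
theorem h_at_critical_point_comparable (M J g : ℝ → ℝ)
    (hMpos : ∀ x > (0 : ℝ), 0 < M x)
    (hMsmooth : ContDiffOn ℝ 2 M (Set.Ioi 0))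
    (hlogconv : ∀ x > (0 : ℝ), 0 < deriv (deriv (fun y => Real.log (M y))) x)
    (hJ : ∀ x > (0 : ℝ), J x = M x ^ (1 / x))
    (hJunb : ∀ B : ℝ, ∃ x > (0 : ℝ), B < J x)
    (hg : ∀ x > (0 : ℝ), g x = x * M x ^ (2 / x))
    (x₀ : ℝ) (hx₀ : 0 < x₀) (hJ' : ∀ x > x₀, 0 < deriv J x)
    (ginv : ℝ → ℝ)
    (hginv_left : ∀ x ∈ Set.Ici x₀, ginv (g x) = x)
    (hginv_right : ∀ y ∈ Set.Ici (g x₀), ginv y ∈ Set.Ici x₀ ∧ g (ginv y) = y)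
    (ε₁ : ℝ) (hε₁ : ε₁ ∈ Set.Ioo (0 : ℝ) 1) :
    ∃ C > (0 : ℝ), ∀ (k ε₀ εc : ℝ) (h : ℝ → ℝ),
      x₀ ^ 2 * J x₀ * deriv J x₀ * Real.exp (2 * x₀ * deriv J x₀ / J x₀) < k →
      2 * g x₀ * Real.log (1 / ε₁) / ε₁ ^ 2 ≤ k →
      ε₀ ∈ Set.Ioo (0 : ℝ) 1 →
      k * ε₀ ^ 2 / Real.log (1 / ε₀) = g x₀ →
      (∀ ε, h ε = ginv (k * ε ^ 2 / Real.log (1 / ε)) * Real.log (1 / ε)) →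
      εc ∈ Set.Ioo ε₀ 1 →
      deriv h εc = 0 →
      ε₁ < εc →
      h ε₁ ≤ h εc ∧ h εc ≤ C * h ε₁ :=
  h_at_critical_point_comparable_general M J g hMpos hMsmooth hlogconv hJ hg x₀ hx₀ hJ' ginv
    hginv_right ε₁ hε₁
end

section
/- The function f tends to +∞ as k → ∞, and there exists k₁ > k₀ such that f is strictly increasing on (k₁, ∞). -/
/-!
Write `L = log M`, `u = L / x = log J` and `φ = x L' - L`, so that `u' = φ / x²`, `φ' = x L'' > 0`
and `J' = J φ / x²`. Then `N² J J' e^{2 N J'/J} = e^{D(N)}` with `D = 2u + log φ + 2φ/x`, which is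
strictly increasing where `φ > 0`, and `f(k)² = φ(N) / D(N)` for `N = N(k)`. As `D ∘ N = log` is
unbounded, so is `φ`; since `φ` increases, `u = ∫ φ / x²` is `o(φ)`, hence `D = o(φ)` and `f → ∞`.
Finally `(φ / D)' = x L'' (2u + log φ - 1) / D²`, which is eventually positive because `u`
increases and `log φ → ∞`.
-/

open Real Filter Set Asymptotics Topology

lemma strictMonoOn_Ioi_of_hasDerivAt_pos {f f' : ℝ → ℝ} {a : ℝ}
    (hf : ∀ x > a, HasDerivAt f (f' x) x) (hf' : ∀ x > a, 0 < f' x) :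
    StrictMonoOn f (Ioi a) :=
  strictMonoOn_of_hasDerivWithinAt_pos (convex_Ioi a)
    (fun x hx => (hf x hx).continuousAt.continuousWithinAt)
    (fun x hx => (hf x (interior_subset hx)).hasDerivWithinAt)
    (fun x hx => hf' x (interior_subset hx))

lemma add_div_le_add_div_of_hasDerivAt_le {u u' : ℝ → ℝ} {a b c : ℝ} (ha : 0 < a) (hab : a ≤ b)
    (hu : ∀ x ∈ Icc a b, HasDerivAt u (u' x) x) (hu' : ∀ x ∈ Icc a b, u' x ≤ c / x ^ 2) :
    u b + c / b ≤ u a + c / a := by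
  have hw : ∀ x ∈ Icc a b, HasDerivAt (fun y => u y + c / y) (u' x - c / x ^ 2) x := by
    intro x hx
    have hx0 : x ≠ 0 := (ha.trans_le hx.1).ne'
    have := (hu x hx).add ((hasDerivAt_inv hx0).const_mul c)
    simp only [mul_neg, ← div_eq_mul_inv, ← sub_eq_add_neg] at this
    exact this
  refine antitoneOn_of_hasDerivWithinAt_nonpos (convex_Icc a b)
    (fun x hx => (hw x hx).continuousAt.continuousWithinAt)
    (fun x hx => (hw x (interior_subset hx)).hasDerivWithinAt)
    (fun x hx => sub_nonpos.2 (hu' x (interior_subset hx)))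
    (left_mem_Icc.2 hab) (right_mem_Icc.2 hab) hab

lemma tendsto_atTop_of_monotoneOn_Ioi {φ : ℝ → ℝ} {a : ℝ} (hφ : MonotoneOn φ (Ioi a))
    (hφ_unbdd : ∀ c, ∃ x > a, c < φ x) : Tendsto φ atTop atTop := by
  refine tendsto_atTop.2 fun c => ?_
  obtain ⟨x, hx, hcx⟩ := hφ_unbdd c
  filter_upwards [eventually_ge_atTop x] with y hy
  exact hcx.le.trans (hφ hx (hx.trans_le hy) hy)

lemma isLittleO_atTop_of_hasDerivAt_div_sq {u φ : ℝ → ℝ} {x₀ : ℝ}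
    (hu : ∀ x > x₀, HasDerivAt u (φ x / x ^ 2) x) (hφ : MonotoneOn φ (Ioi x₀))
    (hφ_top : Tendsto φ atTop atTop) : u =o[atTop] φ := by
  refine IsLittleO.of_bound fun c hc => ?_
  obtain ⟨a, hφa, hax₀, hca⟩ := ((hφ_top.eventually_ge_atTop 0).and
    ((eventually_gt_atTop x₀).and (eventually_ge_atTop (2 / c)))).exists
  have ha0 : 0 < a := (div_pos two_pos hc).trans_le hca
  replace hca : 1 / a ≤ c / 2 := by
    rwa [one_div_le ha0 (half_pos hc), one_div_div]
  have hφ_nonneg : ∀ x ≥ a, 0 ≤ φ x := fun x hx => hφa.trans (hφ hax₀ (hax₀.trans_le hx) hx)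
  have hu_Icc : ∀ x ≥ a, ∀ t ∈ Icc a x, HasDerivAt u (φ t / t ^ 2) t :=
    fun x _ t ht => hu t (hax₀.trans_le ht.1)
  have hu_lower : ∀ x ≥ a, u a ≤ u x := by
    intro x hx
    have := add_div_le_add_div_of_hasDerivAt_le (u := fun y => -u y) (c := 0) ha0 hx
      (fun t ht => (hu_Icc x hx t ht).neg)
      (fun t ht => by simpa using div_nonneg (hφ_nonneg t ht.1) (sq_nonneg t))
    simpa using this
  have hu_upper : ∀ x ≥ a, u x ≤ u a + φ x / a := by
    intro x hx
    have := add_div_le_add_div_of_hasDerivAt_le ha0 hx (hu_Icc x hx) fun t ht =>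
      div_le_div_of_nonneg_right (hφ (hax₀.trans_le ht.1) (hax₀.trans_le hx) ht.2) (sq_nonneg t)
    linarith [div_nonneg (hφ_nonneg x hx) (ha0.le.trans hx)]
  filter_upwards [eventually_ge_atTop a, hφ_top.eventually_ge_atTop (|u a| / (c / 2))]
    with x hxa hx
  have hua : |u a| ≤ c / 2 * φ x := by rwa [div_le_iff₀' (half_pos hc)] at hx
  have hφa : φ x / a ≤ c / 2 * φ x := by
    rw [div_eq_mul_one_div, mul_comm (c / 2)]
    exact mul_le_mul_of_nonneg_left hca (hφ_nonneg x hxa)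
  rw [norm_of_nonneg (hφ_nonneg x hxa), Real.norm_eq_abs, abs_le]
  constructor
  · linarith [hu_lower x hxa, neg_abs_le (u a), mul_nonneg hc.le (hφ_nonneg x hxa)]
  · linarith [hu_upper x hxa, le_abs_self (u a)]

section RightInverse

variable {α β : Type*} [LinearOrder α] [LinearOrder β] {G : α → β} {N : β → α} {x₀ : α} {k₀ : β}

lemma MonotoneOn.strictMonoOn_of_rightInv (hG : MonotoneOn G (Ioi x₀))
    (hN : ∀ k > k₀, x₀ < N k ∧ G (N k) = k) : StrictMonoOn N (Ioi k₀) := by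
  intro p hp q hq hpq
  by_contra! hqp
  have := hG (hN q hq).1 (hN p hp).1 hqp
  rw [(hN p hp).2, (hN q hq).2] at this
  exact this.not_gt hpq

lemma MonotoneOn.tendsto_atTop_of_rightInv [NoMaxOrder α] [NoMaxOrder β]
    (hG : MonotoneOn G (Ioi x₀)) (hN : ∀ k > k₀, x₀ < N k ∧ G (N k) = k) :
    Tendsto N atTop atTop := by
  refine tendsto_atTop.2 fun T => ?_
  obtain ⟨T', hT'⟩ := exists_gt (max T x₀)
  filter_upwards [eventually_gt_atTop (max k₀ (G T'))] with k hk
  have hk₀ : k₀ < k := (le_max_left _ _).trans_lt hk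
  by_contra! hNk
  have := hG (hN k hk₀).1 ((le_max_right _ _).trans_lt hT')
    (hNk.le.trans ((le_max_left _ _).trans hT'.le))
  rw [(hN k hk₀).2] at this
  exact this.not_gt ((le_max_right _ _).trans_lt hk)

lemma exists_lt_of_rightInv [NoMaxOrder β] (hN : ∀ k > k₀, x₀ < N k ∧ G (N k) = k) (B : β) :
    ∃ x > x₀, B < G x := by
  obtain ⟨k, hk⟩ := exists_gt (max k₀ B)
  have hk₀ : k₀ < k := (le_max_left _ _).trans_lt hk
  refine ⟨N k, (hN k hk₀).1, ?_⟩
  rw [(hN k hk₀).2]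
  exact (le_max_right _ _).trans_lt hk

lemma StrictMonoOn.exists_strictMonoOn_comp_of_tendsto {γ : Type*} [Preorder γ] [NoMaxOrder α]
    [Nonempty β] [NoMaxOrder β] {g : α → γ} {a : α} (hg : StrictMonoOn g (Ioi a)) (hN : StrictMonoOn N (Ioi k₀))
    (hN_top : Tendsto N atTop atTop) : ∃ k₁ > k₀, StrictMonoOn (g ∘ N) (Ioi k₁) := by
  obtain ⟨k₂, hk₂⟩ := eventually_atTop.1 (hN_top.eventually_gt_atTop a)
  obtain ⟨k₁, hk₁⟩ := exists_gt (max k₀ k₂)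
  refine ⟨k₁, (le_max_left _ _).trans_lt hk₁, hg.comp (hN.mono (Ioi_subset_Ioi ?_)) ?_⟩
  · exact (le_max_left _ _).trans hk₁.le
  · exact fun k hk => hk₂ k ((le_max_right _ _).trans (hk₁.trans hk).le)

end RightInverse

namespace LogConvex

/-- The Legendre transform of `L` at the slope `L' x`; for `L = log M` and `J x = M x ^ (1 / x)`
it is `x ^ 2 * (log J)' x`. -/
noncomputable def legendre (L : ℝ → ℝ) (x : ℝ) : ℝ := x * deriv L x - L x

/-- `log (x ^ 2 * J x * J' x * exp (2 * x * J' x / J x))` for `J x = exp (L x / x)`. -/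
noncomputable def logLevel (L : ℝ → ℝ) (x : ℝ) : ℝ :=
  2 * (L x / x) + log (legendre L x) + 2 * legendre L x / x

/-- `f k ^ 2 = ratio L (N k)`. -/
noncomputable def ratio (L : ℝ → ℝ) (x : ℝ) : ℝ := legendre L x / logLevel L x

variable {L : ℝ → ℝ} {x x₀ : ℝ}

lemma hasDerivAt_of_contDiffOn_two (hL : ContDiffOn ℝ 2 L (Ioi 0)) (hx : 0 < x) :
    HasDerivAt L (deriv L x) x ∧ HasDerivAt (deriv L) (deriv (deriv L) x) x := by
  have hx' : Ioi (0 : ℝ) ∈ nhds x := isOpen_Ioi.mem_nhds hx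
  refine ⟨((hL.differentiableOn two_ne_zero).differentiableAt hx').hasDerivAt, ?_⟩
  exact (((hL.deriv_of_isOpen isOpen_Ioi le_rfl).differentiableOn one_ne_zero).differentiableAt
    hx').hasDerivAt

lemma hasDerivAt_legendre (hL : ContDiffOn ℝ 2 L (Ioi 0)) (hx : 0 < x) :
    HasDerivAt (legendre L) (x * deriv (deriv L) x) x := by
  obtain ⟨hL₁, hL₂⟩ := hasDerivAt_of_contDiffOn_two hL hx
  exact (((hasDerivAt_id x).mul hL₂).sub hL₁).congr_deriv (by simp)

lemma hasDerivAt_div_id (hL : ContDiffOn ℝ 2 L (Ioi 0)) (hx : 0 < x) :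
    HasDerivAt (fun y => L y / y) (legendre L x / x ^ 2) x :=
  ((hasDerivAt_of_contDiffOn_two hL hx).1.div (hasDerivAt_id x) hx.ne').congr_deriv
    (by simp [legendre, mul_comm])

lemma hasDerivAt_logLevel (hL : ContDiffOn ℝ 2 L (Ioi 0)) (hx : 0 < x) (hφ : 0 < legendre L x) :
    HasDerivAt (logLevel L) (deriv (deriv L) x * (x / legendre L x + 2)) x := by
  have hφ' := hasDerivAt_legendre hL hx
  refine ((((hasDerivAt_div_id hL hx).const_mul 2).add (hφ'.log hφ.ne')).add
    ((hφ'.const_mul 2).div (hasDerivAt_id x) hx.ne')).congr_deriv ?_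
  simp only [legendre, id_eq, mul_one] at hφ ⊢
  field_simp
  ring

lemma hasDerivAt_ratio (hL : ContDiffOn ℝ 2 L (Ioi 0)) (hx : 0 < x) (hφ : 0 < legendre L x)
    (hD : logLevel L x ≠ 0) :
    HasDerivAt (ratio L) (x * deriv (deriv L) x *
      (2 * (L x / x) + log (legendre L x) - 1) / logLevel L x ^ 2) x := by
  refine ((hasDerivAt_legendre hL hx).div (hasDerivAt_logLevel hL hx hφ) hD).congr_deriv ?_
  congr 1
  simp only [logLevel]
  field_simp
  ring

lemma strictMonoOn_legendre (hL : ContDiffOn ℝ 2 L (Ioi 0))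
    (hconv : ∀ x > 0, 0 < deriv (deriv L) x) : StrictMonoOn (legendre L) (Ioi 0) :=
  strictMonoOn_Ioi_of_hasDerivAt_pos (fun _ hx => hasDerivAt_legendre hL hx)
    fun x hx => mul_pos hx (hconv x hx)

lemma strictMonoOn_div_id (hL : ContDiffOn ℝ 2 L (Ioi 0)) (hx₀ : 0 ≤ x₀)
    (hφ : ∀ x > x₀, 0 < legendre L x) : StrictMonoOn (fun y => L y / y) (Ioi x₀) :=
  strictMonoOn_Ioi_of_hasDerivAt_pos (fun _ hx => hasDerivAt_div_id hL (hx₀.trans_lt hx))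
    fun x hx => div_pos (hφ x hx) (pow_pos (hx₀.trans_lt hx) 2)

lemma strictMonoOn_logLevel (hL : ContDiffOn ℝ 2 L (Ioi 0))
    (hconv : ∀ x > 0, 0 < deriv (deriv L) x) (hx₀ : 0 ≤ x₀) (hφ : ∀ x > x₀, 0 < legendre L x) :
    StrictMonoOn (logLevel L) (Ioi x₀) :=
  strictMonoOn_Ioi_of_hasDerivAt_pos
    (fun x hx => hasDerivAt_logLevel hL (hx₀.trans_lt hx) (hφ x hx)) fun x hx =>
      mul_pos (hconv x (hx₀.trans_lt hx)) (add_pos (div_pos (hx₀.trans_lt hx) (hφ x hx)) two_pos)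

lemma tendsto_legendre_atTop (hL : ContDiffOn ℝ 2 L (Ioi 0))
    (hconv : ∀ x > 0, 0 < deriv (deriv L) x) (hx₀ : 0 ≤ x₀) (hφ : ∀ x > x₀, 0 < legendre L x)
    (hD : ∀ B, ∃ x > x₀, B < logLevel L x) : Tendsto (legendre L) atTop atTop := by
  refine tendsto_atTop_of_monotoneOn_Ioi
    ((strictMonoOn_legendre hL hconv).monotoneOn.mono (Ioi_subset_Ioi hx₀)) ?_
  by_contra! hbdd
  obtain ⟨c, hc⟩ := hbdd
  set y := x₀ + 1
  have hy : x₀ < y := lt_add_one x₀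
  have hy0 : 0 < y := hx₀.trans_lt hy
  have hc0 : 0 < c := (hφ y hy).trans_le (hc y hy)
  have hu : ∀ x ≥ y, L x / x ≤ L y / y + c / y := by
    intro x hx
    have := add_div_le_add_div_of_hasDerivAt_le hy0 hx
      (fun t ht => hasDerivAt_div_id hL (hy0.trans_le ht.1)) fun t ht =>
        div_le_div_of_nonneg_right (hc t (hy.trans_le ht.1)) (sq_nonneg t)
    linarith [div_pos hc0 (hy0.trans_le hx)]
  have hD_le : ∀ x ≥ y, logLevel L x ≤ 2 * (L y / y + c / y) + log c + 2 * c / y := by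
    intro x hx
    have hx0 := hy0.trans_le hx
    have hφx := hφ x (hy.trans_le hx)
    have hcx := hc x (hy.trans_le hx)
    have h1 : log (legendre L x) ≤ log c := log_le_log hφx hcx
    have h2 : 2 * legendre L x / x ≤ 2 * c / y := by
      gcongr
    unfold logLevel
    linarith [hu x hx]
  obtain ⟨x, hx, hBx⟩ := hD (2 * (L y / y + c / y) + log c + 2 * c / y)
  rcases le_total y x with hyx | hxy
  · linarith [hD_le x hyx]
  · linarith [hD_le y le_rfl,
      (strictMonoOn_logLevel hL hconv hx₀ hφ).monotoneOn hx hy hxy]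

lemma tendsto_two_mul_div_add_log_legendre_atTop (hL : ContDiffOn ℝ 2 L (Ioi 0)) (hx₀ : 0 ≤ x₀)
    (hφ : ∀ x > x₀, 0 < legendre L x) (hφ_top : Tendsto (legendre L) atTop atTop) :
    Tendsto (fun x => 2 * (L x / x) + log (legendre L x) - 1) atTop atTop := by
  have hu_ge : ∀ᶠ x in atTop, 2 * (L (x₀ + 1) / (x₀ + 1)) ≤ 2 * (L x / x) := by
    filter_upwards [eventually_ge_atTop (x₀ + 1)] with x hx
    have := (strictMonoOn_div_id hL hx₀ hφ).monotoneOn (lt_add_one x₀)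
      ((lt_add_one x₀).trans_le hx) hx
    linarith
  refine (tendsto_atTop_add_left_of_le' _ _ hu_ge
    (tendsto_atTop_add_const_right _ (-1) (tendsto_log_atTop.comp hφ_top))).congr fun x => ?_
  simp only [Function.comp_apply]
  ring

lemma logLevel_pos (hx : 0 < x) (hφ : 0 < legendre L x)
    (h : 0 < 2 * (L x / x) + log (legendre L x) - 1) : 0 < logLevel L x := by
  have : 0 < 2 * legendre L x / x := by positivity
  unfold logLevel
  linarith

lemma tendsto_ratio_atTop (hL : ContDiffOn ℝ 2 L (Ioi 0))
    (hconv : ∀ x > 0, 0 < deriv (deriv L) x) (hx₀ : 0 ≤ x₀) (hφ : ∀ x > x₀, 0 < legendre L x)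
    (hφ_top : Tendsto (legendre L) atTop atTop) : Tendsto (ratio L) atTop atTop := by
  have hu : (fun x => L x / x) =o[atTop] legendre L :=
    isLittleO_atTop_of_hasDerivAt_div_sq (fun _ hx => hasDerivAt_div_id hL (hx₀.trans_lt hx))
      ((strictMonoOn_legendre hL hconv).monotoneOn.mono (Ioi_subset_Ioi hx₀)) hφ_top
  have hlog : (fun x => log (legendre L x)) =o[atTop] legendre L :=
    isLittleO_log_id_atTop.comp_tendsto hφ_top
  have hD : Tendsto (fun x => logLevel L x / legendre L x) atTop (𝓝 0) := by
    have := ((hu.tendsto_div_nhds_zero.const_mul 2).add hlog.tendsto_div_nhds_zero).add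
      ((tendsto_const_nhds (x := (2 : ℝ))).div_atTop tendsto_id)
    simp only [mul_zero, add_zero] at this
    refine this.congr' ?_
    filter_upwards [hφ_top.eventually_gt_atTop 0, eventually_gt_atTop 0] with x hφx hx
    simp only [logLevel, id_eq]
    field_simp
  have hD_pos : ∀ᶠ x in atTop, 0 < logLevel L x / legendre L x := by
    filter_upwards [eventually_gt_atTop x₀,
      (tendsto_two_mul_div_add_log_legendre_atTop hL hx₀ hφ hφ_top).eventually_gt_atTop 0]
      with x hx h
    exact div_pos (logLevel_pos (hx₀.trans_lt hx) (hφ x hx) h) (hφ x hx)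
  refine (tendsto_nhdsWithin_iff.2 ⟨hD, hD_pos⟩).inv_tendsto_nhdsGT_zero.congr fun x => ?_
  simp only [Pi.inv_apply, inv_div, ratio]

lemma exists_strictMonoOn_sqrt_ratio (hL : ContDiffOn ℝ 2 L (Ioi 0))
    (hconv : ∀ x > 0, 0 < deriv (deriv L) x) (hx₀ : 0 ≤ x₀) (hφ : ∀ x > x₀, 0 < legendre L x)
    (hφ_top : Tendsto (legendre L) atTop atTop) :
    ∃ a, StrictMonoOn (fun x => √(ratio L x)) (Ioi a) := by
  obtain ⟨a, ha⟩ := eventually_atTop.1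
    (((tendsto_two_mul_div_add_log_legendre_atTop hL hx₀ hφ hφ_top).eventually_gt_atTop 0).and
      (eventually_gt_atTop x₀))
  have hx0 : ∀ x > a, 0 < x := fun x hx => hx₀.trans_lt (ha x hx.le).2
  have hφa : ∀ x > a, 0 < legendre L x := fun x hx => hφ x (ha x hx.le).2
  have hD : ∀ x > a, 0 < logLevel L x := fun x hx =>
    logLevel_pos (hx0 x hx) (hφa x hx) (ha x hx.le).1
  have hmono : StrictMonoOn (ratio L) (Ioi a) :=
    strictMonoOn_Ioi_of_hasDerivAt_pos
      (fun x hx => hasDerivAt_ratio hL (hx0 x hx) (hφa x hx) (hD x hx).ne') fun x hx =>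
        div_pos (mul_pos (mul_pos (hx0 x hx) (hconv x (hx0 x hx))) (ha x hx.le).1)
          (pow_pos (hD x hx) 2)
  exact ⟨a, fun p hp q hq hpq =>
    Real.sqrt_lt_sqrt (div_pos (hφa p hp) (hD p hp)).le (hmono hp hq hpq)⟩

lemma deriv_eq_mul_legendre {J : ℝ → ℝ} (hL : ContDiffOn ℝ 2 L (Ioi 0))
    (hJ : ∀ x > 0, J x = exp (L x / x)) (hx : 0 < x) :
    deriv J x = J x * (legendre L x / x ^ 2) := by
  rw [hJ x hx]
  exact ((hasDerivAt_div_id hL hx).exp.congr_of_eventuallyEq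
    (eventuallyEq_of_mem (isOpen_Ioi.mem_nhds hx) hJ)).deriv

lemma legendre_pos_of_deriv_pos {J : ℝ → ℝ} (hL : ContDiffOn ℝ 2 L (Ioi 0))
    (hJ : ∀ x > 0, J x = exp (L x / x)) (hx : 0 < x) (hJ' : 0 < deriv J x) :
    0 < legendre L x := by
  rw [deriv_eq_mul_legendre hL hJ hx, hJ x hx] at hJ'
  exact (div_pos_iff_of_pos_right (pow_pos hx 2)).1 (pos_of_mul_pos_right hJ' (exp_pos _).le)

lemma sq_mul_mul_mul_exp_eq_exp_logLevel {j j' : ℝ} (hx : 0 < x) (hφ : 0 < legendre L x)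
    (hj : j = exp (L x / x)) (hj' : j' = j * (legendre L x / x ^ 2)) :
    x ^ 2 * j * j' * exp (2 * x * j' / j) = exp (logLevel L x) := by
  have hj0 : j ≠ 0 := hj ▸ (exp_pos _).ne'
  have hexp : 2 * x * j' / j = 2 * legendre L x / x := by
    rw [hj']
    field_simp
  rw [hexp, logLevel, two_mul (L x / x), exp_add, exp_add, exp_add, exp_log hφ, ← hj, hj']
  field_simp

lemma mul_sqrt_div_div_sqrt_logLevel {j j' : ℝ} (hx : 0 < x) (hφ : 0 < legendre L x)
    (hj : j ≠ 0) (hj' : j' = j * (legendre L x / x ^ 2)) :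
    x * √(j' / j) / √(logLevel L x) = √(ratio L x) := by
  rw [hj', mul_div_cancel_left₀ _ hj, sqrt_div hφ.le, sqrt_sq hx.le, mul_div_cancel₀ _ hx.ne',
    ratio, sqrt_div hφ.le]

end LogConvex

open LogConvex

theorem f_tendsto_atTop_and_eventually_strictMono_general (M J : ℝ → ℝ)
    (hMpos : ∀ x > (0 : ℝ), 0 < M x)
    (hMsmooth : ContDiffOn ℝ 2 M (Set.Ioi 0))
    (hlogconv : ∀ x > (0 : ℝ), 0 < deriv (deriv (fun y => Real.log (M y))) x)
    (hJ : ∀ x > (0 : ℝ), J x = M x ^ (1 / x))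
    (x₀ : ℝ) (hx₀ : 0 < x₀) (hJ' : ∀ x > x₀, 0 < deriv J x)
    (Nfun f : ℝ → ℝ)
    (hNfun : ∀ k : ℝ,
      x₀ ^ 2 * J x₀ * deriv J x₀ * Real.exp (2 * x₀ * deriv J x₀ / J x₀) < k →
      x₀ < Nfun k ∧
        (Nfun k) ^ 2 * J (Nfun k) * deriv J (Nfun k) *
          Real.exp (2 * Nfun k * deriv J (Nfun k) / J (Nfun k)) = k)
    (hf : ∀ k, f k = Nfun k * Real.sqrt (deriv J (Nfun k) / J (Nfun k)) /
      Real.sqrt (Real.log k)) :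
    Filter.Tendsto f Filter.atTop Filter.atTop ∧
    ∃ k₁ : ℝ,
      x₀ ^ 2 * J x₀ * deriv J x₀ * Real.exp (2 * x₀ * deriv J x₀ / J x₀) < k₁ ∧
      StrictMonoOn f (Set.Ioi k₁) := by
  set k₀ := x₀ ^ 2 * J x₀ * deriv J x₀ * exp (2 * x₀ * deriv J x₀ / J x₀)
  set L : ℝ → ℝ := fun y => log (M y)
  have hL : ContDiffOn ℝ 2 L (Ioi 0) := hMsmooth.log fun x hx => (hMpos x hx).ne'
  have hJ_eq : ∀ x > 0, J x = exp (L x / x) := fun x hx => by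
    rw [hJ x hx, rpow_def_of_pos (hMpos x hx), mul_one_div]
  have hJ'_eq : ∀ x > 0, deriv J x = J x * (legendre L x / x ^ 2) := fun x hx =>
    deriv_eq_mul_legendre hL hJ_eq hx
  have hφ : ∀ x > x₀, 0 < legendre L x := fun x hx =>
    legendre_pos_of_deriv_pos hL hJ_eq (hx₀.trans hx) (hJ' x hx)
  have hN : ∀ k > k₀, x₀ < Nfun k ∧ exp (logLevel L (Nfun k)) = k := fun k hk => by
    obtain ⟨hNk, hk_eq⟩ := hNfun k hk
    have hN0 := hx₀.trans hNk
    rw [sq_mul_mul_mul_exp_eq_exp_logLevel hN0 (hφ _ hNk) (hJ_eq _ hN0) (hJ'_eq _ hN0)] at hk_eq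
    exact ⟨hNk, hk_eq⟩
  have hf_eq : ∀ k > k₀, f k = √(ratio L (Nfun k)) := fun k hk => by
    have hN0 := hx₀.trans (hN k hk).1
    have hlog : log k = logLevel L (Nfun k) := by
      rw [← log_exp (logLevel L (Nfun k)), (hN k hk).2]
    rw [hf, hlog, mul_sqrt_div_div_sqrt_logLevel hN0 (hφ _ (hN k hk).1)
      (hJ_eq _ hN0 ▸ (exp_pos _).ne') (hJ'_eq _ hN0)]
  have hG : MonotoneOn (fun x => exp (logLevel L x)) (Ioi x₀) :=
    (exp_strictMono.comp_strictMonoOn (strictMonoOn_logLevel hL hlogconv hx₀.le hφ)).monotoneOn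
  have hN_top := hG.tendsto_atTop_of_rightInv hN
  have hφ_top : Tendsto (legendre L) atTop atTop := by
    refine tendsto_legendre_atTop hL hlogconv hx₀.le hφ fun B => ?_
    obtain ⟨x, hx, hBx⟩ := exists_lt_of_rightInv (G := fun x => exp (logLevel L x)) hN (exp B)
    exact ⟨x, hx, exp_lt_exp.1 hBx⟩
  refine ⟨?_, ?_⟩
  · refine (tendsto_sqrt_atTop.comp
      ((tendsto_ratio_atTop hL hlogconv hx₀.le hφ hφ_top).comp hN_top)).congr' ?_
    filter_upwards [eventually_gt_atTop k₀] with k hk using (hf_eq k hk).symm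
  · obtain ⟨a, ha⟩ := exists_strictMonoOn_sqrt_ratio hL hlogconv hx₀.le hφ hφ_top
    obtain ⟨k₁, hk₁, hmono⟩ :=
      ha.exists_strictMonoOn_comp_of_tendsto (hG.strictMonoOn_of_rightInv hN) hN_top
    exact ⟨k₁, hk₁, hmono.congr fun k hk => (hf_eq k (hk₁.trans hk)).symm⟩

/-- The function `f` tends to `+∞` as `k → ∞`, and there exists `k₁ > k₀` such that `f`
is strictly increasing on `(k₁,∞)`.  Here, for
`k > k₀ := x₀²·J(x₀)·J'(x₀)·e^{2·x₀·J'(x₀)/J(x₀)}`, `N(k)` is the unique `N ∈ (x₀,∞)`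
with `N²·J(N)·J'(N)·e^{2·N·J'(N)/J(N)} = k`, and
`f(k) = N(k)·√(J'(N(k))/J(N(k)))/√(log k)`. -/
theorem f_tendsto_atTop_and_eventually_strictMono (M J : ℝ → ℝ)
    (hMpos : ∀ x > (0 : ℝ), 0 < M x)
    (hMsmooth : ContDiffOn ℝ 2 M (Set.Ioi 0))
    (hlogconv : ∀ x > (0 : ℝ), 0 < deriv (deriv (fun y => Real.log (M y))) x)
    (hJ : ∀ x > (0 : ℝ), J x = M x ^ (1 / x))
    (hJunb : ∀ B : ℝ, ∃ x > (0 : ℝ), B < J x)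
    (x₀ : ℝ) (hx₀ : 0 < x₀) (hJ' : ∀ x > x₀, 0 < deriv J x)
    (Nfun f : ℝ → ℝ)
    (hNfun : ∀ k : ℝ,
      x₀ ^ 2 * J x₀ * deriv J x₀ * Real.exp (2 * x₀ * deriv J x₀ / J x₀) < k →
      x₀ < Nfun k ∧
        (Nfun k) ^ 2 * J (Nfun k) * deriv J (Nfun k) *
          Real.exp (2 * Nfun k * deriv J (Nfun k) / J (Nfun k)) = k)
    (hf : ∀ k, f k = Nfun k * Real.sqrt (deriv J (Nfun k) / J (Nfun k)) /
      Real.sqrt (Real.log k)) :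
    Filter.Tendsto f Filter.atTop Filter.atTop ∧
    ∃ k₁ : ℝ,
      x₀ ^ 2 * J x₀ * deriv J x₀ * Real.exp (2 * x₀ * deriv J x₀ / J x₀) < k₁ ∧
      StrictMonoOn f (Set.Ioi k₁) :=
  f_tendsto_atTop_and_eventually_strictMono_general M J hMpos hMsmooth hlogconv hJ x₀ hx₀ hJ' Nfun f
    hNfun hf
end

section
/- For every k > e³, the equation N·log N·e^{2/log N} = k has a unique solution N(k) in (e, ∞); setting f(k)² := N(k)/(log N(k)·log k), one has lim_{k→∞} f(k)²·(log k)³/k = 1. -/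
/-!
With `u = log N` the equation reads `log k = u + log u + 2 / u`, whose right-hand side is strictly
increasing for `u ≥ 1`; this gives uniqueness, and since it is at most `2u + 2`, also
`log N(k) → ∞`. Substituting `k = N u e^{2/u}` turns `f(k)² (log k)³ / k` into
`(log k / u)² e^{-2/u}`, and `log k / u = 1 + log u / u + 2 / u² → 1`.
-/

open Real Filter Set Topology

lemma mul_log_mul_exp_two_div_log {N : ℝ} (hN : 1 < N) :
    N * log N * exp (2 / log N) = exp (log N + log (log N) + 2 / log N) := by
  rw [exp_add, exp_add, exp_log (by linarith), exp_log (log_pos hN)]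

lemma log_eq_of_mul_log_mul_exp_two_div_log_eq {N k : ℝ} (hN : 1 < N)
    (hk : N * log N * exp (2 / log N) = k) : log k = log N + log (log N) + 2 / log N := by
  rw [← hk, mul_log_mul_exp_two_div_log hN, log_exp]

lemma strictMonoOn_add_log_add_two_div :
    StrictMonoOn (fun u : ℝ => u + log u + 2 / u) (Ici 1) := by
  intro a (ha : 1 ≤ a) b (hb : 1 ≤ b) hab
  have hb0 : 0 < b := by linarith
  have hlog : 1 - a / b ≤ log b - log a := by
    have := log_le_sub_one_of_pos (div_pos (by linarith) hb0 : 0 < a / b)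
    rw [log_div (by linarith) hb0.ne'] at this
    linarith
  -- the decrease `2 / a - 2 / b = 2 (b - a) / (a b)` of the last term is beaten since `a b + a > 2`
  have hdiv : 2 / a - 2 / b < (b - a) + (1 - a / b) := by
    rw [div_sub_div _ _ (by linarith) hb0.ne', div_lt_iff₀ (by nlinarith)]
    field_simp
    nlinarith [mul_pos (sub_pos.2 hab) (sub_pos.2 hab),
      mul_nonneg (sub_nonneg.2 ha) (sub_pos.2 hab).le]
  show a + log a + 2 / a < b + log b + 2 / b
  linarith

lemma strictMonoOn_mul_log_mul_exp_two_div_log :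
    StrictMonoOn (fun N : ℝ => N * log N * exp (2 / log N)) (Ici (exp 1)) := by
  intro a (ha : exp 1 ≤ a) b (hb : exp 1 ≤ b) hab
  have ha1 : 1 < a := (one_lt_exp_iff.2 one_pos).trans_le ha
  have hb1 : 1 < b := (one_lt_exp_iff.2 one_pos).trans_le hb
  have hloga : 1 ≤ log a := (le_log_iff_exp_le (by linarith)).2 ha
  have hlogb : 1 ≤ log b := (le_log_iff_exp_le (by linarith)).2 hb
  simp only [mul_log_mul_exp_two_div_log ha1, mul_log_mul_exp_two_div_log hb1, exp_lt_exp]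
  exact strictMonoOn_add_log_add_two_div hloga hlogb (log_lt_log (by linarith) hab)

lemma add_log_add_two_div_le {u : ℝ} (hu : 1 ≤ u) : u + log u + 2 / u ≤ 2 * u + 2 := by
  have hlog := log_le_sub_one_of_pos (by linarith : 0 < u)
  have hdiv : 2 / u ≤ 2 := div_le_self zero_le_two hu
  linarith

lemma tendsto_add_log_add_two_div_div_self :
    Tendsto (fun t : ℝ => (t + log t + 2 / t) / t) atTop (𝓝 1) := by
  have hlog : Tendsto (fun t : ℝ => log t / t) atTop (𝓝 0) :=
    isLittleO_log_id_atTop.tendsto_div_nhds_zero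
  have hinv : Tendsto (fun t : ℝ => 2 / t ^ 2) atTop (𝓝 0) :=
    tendsto_const_nhds.div_atTop (tendsto_pow_atTop two_ne_zero)
  have hsum := (tendsto_const_nhds (x := (1 : ℝ))).add (hlog.add hinv)
  rw [add_zero, add_zero] at hsum
  refine hsum.congr' ?_
  filter_upwards [eventually_gt_atTop 0] with t ht
  field_simp
  ring

lemma tendsto_sq_add_log_add_two_div_div_self_div_exp :
    Tendsto (fun t : ℝ => ((t + log t + 2 / t) / t) ^ 2 / exp (2 / t)) atTop (𝓝 1) := by
  have hexp : Tendsto (fun t : ℝ => exp (2 / t)) atTop (𝓝 1) := by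
    simpa [Function.comp_def] using
      (continuous_exp.tendsto 0).comp (tendsto_const_nhds.div_atTop tendsto_id)
  simpa [Pi.div_def] using (tendsto_add_log_add_two_div_div_self.pow 2).div hexp one_ne_zero

lemma div_mul_pow_three_div_eq_sq_div_exp {N k L : ℝ} (hN : 1 < N)
    (hk : N * log N * exp (2 / log N) = k) (hL : L ≠ 0) :
    N / (log N * L) * L ^ 3 / k = (L / log N) ^ 2 / exp (2 / log N) := by
  have hlog := log_pos hN
  subst hk
  field_simp

/-- For every `k > e³`, the equation `N·log N·e^{2/log N} = k` has a unique solution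
`N(k)` in `(e, ∞)`; setting `f(k)² := N(k)/(log N(k)·log k)`, one has
`lim_{k→∞} f(k)²·(log k)³/k = 1`.  (This is the Denjoy quasi-analytic majorant
`M(x) = (log x)^x`, for which `J(x) = log x`.) -/
theorem denjoy_N_unique_and_f_asymptotics (Nfun : ℝ → ℝ)
    (hN : ∀ k > Real.exp 3,
      Real.exp 1 < Nfun k ∧
        Nfun k * Real.log (Nfun k) * Real.exp (2 / Real.log (Nfun k)) = k) :
    (∀ k > Real.exp 3, ∃! N : ℝ,
      N ∈ Set.Ioi (Real.exp 1) ∧ N * Real.log N * Real.exp (2 / Real.log N) = k) ∧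
    Filter.Tendsto
      (fun k => Nfun k / (Real.log (Nfun k) * Real.log k) * (Real.log k) ^ 3 / k)
      Filter.atTop (nhds 1) := by
  refine ⟨fun k hk => ⟨Nfun k, hN k hk, fun N ⟨hNe, hNk⟩ =>
    strictMonoOn_mul_log_mul_exp_two_div_log.injOn (Ioi_subset_Ici_self hNe) (hN k hk).1.le
      (hNk.trans (hN k hk).2.symm)⟩, ?_⟩
  have hN_gt_one : ∀ k > exp 3, 1 < Nfun k := fun k hk =>
    (one_lt_exp_iff.2 one_pos).trans (hN k hk).1
  have hlogN_ge_one : ∀ k > exp 3, 1 ≤ log (Nfun k) := fun k hk =>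
    (le_log_iff_exp_le (by linarith [hN_gt_one k hk])).2 (hN k hk).1.le
  have hlogN : Tendsto (fun k => log (Nfun k)) atTop atTop := by
    refine tendsto_atTop_mono' atTop ?_
      ((tendsto_log_atTop.atTop_add (tendsto_const_nhds (x := (-2 : ℝ)))).atTop_div_const two_pos)
    filter_upwards [eventually_gt_atTop (exp 3)] with k hk
    have := add_log_add_two_div_le (hlogN_ge_one k hk)
    rw [← log_eq_of_mul_log_mul_exp_two_div_log_eq (hN_gt_one k hk) (hN k hk).2] at this
    linarith
  refine (tendsto_sq_add_log_add_two_div_div_self_div_exp.comp hlogN).congr' ?_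
  filter_upwards [eventually_gt_atTop (exp 3)] with k hk
  have hlogk : 0 < log k :=
    three_pos.trans ((lt_log_iff_exp_lt (by linarith [exp_pos 3])).2 hk)
  rw [Function.comp_apply, ← log_eq_of_mul_log_mul_exp_two_div_log_eq (hN_gt_one k hk) (hN k hk).2,
    div_mul_pow_three_div_eq_sq_div_exp (hN_gt_one k hk) (hN k hk).2 hlogk.ne']
end

section
/- Let n ≥ 1, A > 0, and let N ≥ 3 be an integer. Let M be a positive function defined on the positive integers satisfying M(m)^{1/m} ≤ M(N)^{1/N} for every integer 1 ≤ m ≤ N. Let (c_α) be complex numbers indexed by multi-indices α ∈ ℤ_{≥0}^{2n} with 3 ≤ |α| ≤ N, satisfying |c_α| ≤ A^{|α|−2}·M(|α|−2). Then there exists a constant C depending only on n such that for every ε ∈ (0, 1/(16A)], every r ∈ (0, ε·M(N)^{−1/N}], the polynomial p(v) = Σ_{3 ≤ |α| ≤ N} c_α·r^{|α|−2}·v^α in 2n variables satisfies |D^β p(v)| ≤ C·A·ε for every multi-index β with |β| ≤ 2 and every v ∈ ℂ^{2n} with |v_i| ≤ 2 for all i. -/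
/-!
Since `M m ^ (1/m) ≤ t := M N ^ (1/N)`, the majorant gives `‖c_α‖ ≤ (A t)^(|α|-2)`,
and `t r ≤ ε` turns this into `‖c_α‖ r^(|α|-2) ≤ (A ε)^(|α|-2)`. Differentiating at most
twice costs a factor `|α|^2`, and the monomial is at most `2^|α|` on the polydisc `|v_i| ≤ 2`.
As `A ε ≤ 1/16`, each term of `D^β p` is then at most `1024 A ε 2^(-|α|)`, and summing
`2^(-|α|)` over all multi-indices in `2n` variables gives at most `2^(2n)`.
-/

open Finset

lemma le_pow_of_rpow_one_div_le {x t : ℝ} {m : ℕ} (hx : 0 ≤ x) (hm : m ≠ 0)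
    (h : x ^ (1 / (m : ℝ)) ≤ t) : x ≤ t ^ m :=
  calc x = (x ^ ((m : ℝ)⁻¹)) ^ m := (Real.rpow_inv_natCast_pow hx hm).symm
    _ ≤ t ^ m := by
      rw [← one_div]
      exact pow_le_pow_left₀ (Real.rpow_nonneg hx _) h m

lemma mul_pow_le_of_le_mul_pow {a A μ t r ε : ℝ} {m : ℕ} (hA : 0 ≤ A) (ht : 0 ≤ t)
    (hr : 0 ≤ r) (ha : a ≤ A ^ m * μ) (hμ : μ ≤ t ^ m) (htr : t * r ≤ ε) :
    a * r ^ m ≤ (A * ε) ^ m :=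
  calc a * r ^ m ≤ A ^ m * t ^ m * r ^ m := by gcongr; exact ha.trans (by gcongr)
    _ = (A * (t * r)) ^ m := by ring
    _ ≤ (A * ε) ^ m := by gcongr

lemma prod_descFactorial_le_sum_pow {ι : Type*} [Fintype ι] (α β : ι → ℕ) :
    ∏ i, (α i).descFactorial (β i) ≤ (∑ i, α i) ^ ∑ i, β i :=
  calc ∏ i, (α i).descFactorial (β i) ≤ ∏ i, (α i) ^ (β i) :=
        prod_le_prod' fun i _ => Nat.descFactorial_le_pow _ _
    _ ≤ ∏ i, (∑ j, α j) ^ (β i) :=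
        prod_le_prod' fun i _ => Nat.pow_le_pow_left (single_le_sum (by simp) (mem_univ i)) _
    _ = (∑ i, α i) ^ ∑ i, β i := prod_pow_eq_pow_sum _ _ _

lemma prod_norm_pow_sub_le {ι E : Type*} [Fintype ι] [SeminormedAddCommGroup E] {v : ι → E}
    {R : ℝ} (hR : 1 ≤ R) (hv : ∀ i, ‖v i‖ ≤ R) (α β : ι → ℕ) :
    ∏ i, ‖v i‖ ^ (α i - β i) ≤ R ^ ∑ i, α i :=
  calc ∏ i, ‖v i‖ ^ (α i - β i) ≤ ∏ i, R ^ (α i - β i) :=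
        prod_le_prod (fun _ _ => by positivity) fun i _ =>
          pow_le_pow_left₀ (norm_nonneg _) (hv i) _
    _ ≤ ∏ i, R ^ α i :=
        prod_le_prod (fun _ _ => by positivity) fun _ _ => pow_le_pow_right₀ hR (Nat.sub_le _ _)
    _ = R ^ ∑ i, α i := prod_pow_eq_pow_sum _ _ _

lemma sq_add_three_le_sixteen_mul_four_pow (j : ℕ) : (j + 3) ^ 2 ≤ 16 * 4 ^ j := by
  have hj : j + 3 ≤ 4 * 2 ^ j := by
    have := @Nat.lt_two_pow_self j
    have := @Nat.one_le_two_pow j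
    omega
  calc (j + 3) ^ 2 ≤ (4 * 2 ^ j) ^ 2 := Nat.pow_le_pow_left hj 2
    _ = 16 * 4 ^ j := by rw [mul_pow, ← pow_mul, mul_comm j 2, pow_mul]; norm_num

lemma pow_sub_two_mul_sq_mul_four_pow_le {x : ℝ} (hx₀ : 0 ≤ x) (hx : x ≤ 1 / 16) {k : ℕ}
    (hk : 3 ≤ k) : x ^ (k - 2) * (k : ℝ) ^ 2 * 4 ^ k ≤ 1024 * x := by
  obtain ⟨j, rfl⟩ := Nat.exists_eq_add_of_le' hk
  have hsq : ((j + 3 : ℕ) : ℝ) ^ 2 ≤ 16 * 4 ^ j := by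
    exact_mod_cast sq_add_three_le_sixteen_mul_four_pow j
  calc x ^ (j + 3 - 2) * ((j + 3 : ℕ) : ℝ) ^ 2 * 4 ^ (j + 3)
      = x * x ^ j * ((j + 3 : ℕ) : ℝ) ^ 2 * (64 * 4 ^ j) := by
        rw [show j + 3 - 2 = j + 1 by omega]; ring
    _ ≤ x * (1 / 16) ^ j * (16 * 4 ^ j) * (64 * 4 ^ j) := by gcongr
    _ = 1024 * x * ((1 / 16) * 4 * 4) ^ j := by rw [mul_pow, mul_pow]; ring
    _ = 1024 * x := by norm_num

lemma norm_derivative_term_le {ι : Type*} [Fintype ι] {c : ℂ} {r x : ℝ} {α β : ι → ℕ}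
    {v : ι → ℂ} (hr : 0 ≤ r) (hx₀ : 0 ≤ x) (hx : x ≤ 1 / 16) (hα : 3 ≤ ∑ i, α i)
    (hβ : ∑ i, β i ≤ 2) (hc : ‖c‖ * r ^ (∑ i, α i - 2) ≤ x ^ (∑ i, α i - 2))
    (hv : ∀ i, ‖v i‖ ≤ 2) :
    ‖c * (r : ℂ) ^ (∑ i, α i - 2) * (∏ i, ((α i).descFactorial (β i) : ℂ)) *
        ∏ i, v i ^ (α i - β i)‖ ≤ 1024 * x * (1 / 2) ^ ∑ i, α i := by
  set k := ∑ i, α i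
  have hdesc : ∏ i, ((α i).descFactorial (β i) : ℝ) ≤ (k : ℝ) ^ 2 := by
    have : ∏ i, (α i).descFactorial (β i) ≤ k ^ 2 :=
      (prod_descFactorial_le_sum_pow α β).trans (Nat.pow_le_pow_right (by omega) hβ)
    exact_mod_cast this
  have hnorm : ‖c * (r : ℂ) ^ (k - 2) * (∏ i, ((α i).descFactorial (β i) : ℂ)) *
      ∏ i, v i ^ (α i - β i)‖ = ‖c‖ * r ^ (k - 2) *
        (∏ i, ((α i).descFactorial (β i) : ℝ)) * ∏ i, ‖v i‖ ^ (α i - β i) := by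
    simp [norm_prod, abs_of_nonneg hr]
  rw [hnorm]
  calc ‖c‖ * r ^ (k - 2) * (∏ i, ((α i).descFactorial (β i) : ℝ)) *
        ∏ i, ‖v i‖ ^ (α i - β i)
      ≤ x ^ (k - 2) * (k : ℝ) ^ 2 * 2 ^ k := by
        gcongr; exact prod_norm_pow_sub_le one_le_two hv α β
    _ = x ^ (k - 2) * (k : ℝ) ^ 2 * 4 ^ k * (1 / 2) ^ k := by
        rw [mul_assoc _ ((4 : ℝ) ^ k), ← mul_pow]; norm_num
    _ ≤ 1024 * x * (1 / 2) ^ k :=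
        mul_le_mul_of_nonneg_right (pow_sub_two_mul_sq_mul_four_pow_le hx₀ hx hα) (by positivity)

lemma sum_half_pow_sum_le {ι : Type*} [Fintype ι] [DecidableEq ι] (s : Finset (ι → ℕ)) :
    ∑ α ∈ s, (1 / 2 : ℝ) ^ ∑ i, α i ≤ 2 ^ Fintype.card ι := by
  set K := s.sup fun α => ∑ i, α i
  have hs : s ⊆ Fintype.piFinset fun _ => range (K + 1) := fun α hα =>
    Fintype.mem_piFinset.2 fun i => mem_range.2 <| Nat.lt_succ_of_le <|
      (single_le_sum (fun _ _ => Nat.zero_le _) (mem_univ i)).trans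
        (le_sup (f := fun α => ∑ i, α i) hα)
  calc ∑ α ∈ s, (1 / 2 : ℝ) ^ ∑ i, α i
      ≤ ∑ α ∈ Fintype.piFinset (fun _ : ι => range (K + 1)), ∏ i, (1 / 2 : ℝ) ^ α i := by
        simp only [prod_pow_eq_pow_sum]
        exact sum_le_sum_of_subset_of_nonneg hs fun _ _ _ => by positivity
    _ = ∏ _i : ι, ∑ a ∈ range (K + 1), (1 / 2 : ℝ) ^ a := (prod_univ_sum _ _).symm
    _ ≤ ∏ _i : ι, (2 : ℝ) :=
        prod_le_prod (fun _ _ => by positivity) fun _ _ => sum_geometric_two_le _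
    _ = 2 ^ Fintype.card ι := by rw [prod_const, card_univ]

theorem taylor_tail_C2_bound_general (n : ℕ) :
    ∃ C > (0 : ℝ),
      ∀ (A : ℝ), 0 < A →
      ∀ (N : ℕ), 3 ≤ N →
      ∀ (M : ℕ → ℝ), (∀ m : ℕ, 1 ≤ m → 0 < M m) →
      (∀ m : ℕ, 1 ≤ m → m ≤ N → (M m) ^ (1 / (m : ℝ)) ≤ (M N) ^ (1 / (N : ℝ))) →
      ∀ (c : (Fin (2 * n) → ℕ) → ℂ),
      (∀ α : Fin (2 * n) → ℕ, 3 ≤ ∑ i, α i → ∑ i, α i ≤ N →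
        ‖c α‖ ≤ A ^ ((∑ i, α i) - 2) * M ((∑ i, α i) - 2)) →
      ∀ ε : ℝ, 0 < ε → ε ≤ 1 / (16 * A) →
      ∀ r : ℝ, 0 < r → r ≤ ε * (M N) ^ (-(1 / (N : ℝ))) →
      ∀ β : Fin (2 * n) → ℕ, (∑ i, β i) ≤ 2 →
      ∀ v : Fin (2 * n) → ℂ, (∀ i, ‖v i‖ ≤ 2) →
      ‖(∑ α ∈ (Fintype.piFinset fun _ : Fin (2 * n) => Finset.range (N + 1)) |>.filter
            (fun α => 3 ≤ ∑ i, α i ∧ ∑ i, α i ≤ N),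
          if ∀ i, β i ≤ α i then
            c α * (r : ℂ) ^ ((∑ i, α i) - 2) *
              (∏ i, (Nat.descFactorial (α i) (β i) : ℂ)) *
              ∏ i, (v i) ^ (α i - β i)
          else 0)‖ ≤ C * A * ε := by
  refine ⟨1024 * 2 ^ (2 * n), by positivity, ?_⟩
  intro A hA N hN M hM hMN c hc ε hε hεA r hr hrε β hβ v hv
  have hMN₀ : 0 < M N := hM N (by omega)
  set t := M N ^ (1 / (N : ℝ))
  have htr : t * r ≤ ε := by
    rw [Real.rpow_neg hMN₀.le, ← div_eq_mul_inv] at hrε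
    rwa [← le_div_iff₀' (Real.rpow_pos_of_pos hMN₀ _)]
  have hAε : A * ε ≤ 1 / 16 := by
    rw [le_div_iff₀ (by positivity)] at hεA
    linarith
  refine (norm_sum_le_of_le _ (n := fun α => 1024 * (A * ε) * (1 / 2) ^ ∑ i, α i)
    fun α hα => ?_).trans ?_
  · obtain ⟨h3, hαN⟩ := (mem_filter.1 hα).2
    split_ifs
    · refine norm_derivative_term_le hr.le (by positivity) hAε h3 hβ ?_ hv
      refine mul_pow_le_of_le_mul_pow hA.le (by positivity) hr.le (hc α h3 hαN) ?_ htr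
      exact le_pow_of_rpow_one_div_le (hM _ (by omega)).le (by omega) (hMN _ (by omega) (by omega))
    · rw [norm_zero]; positivity
  · have hsum := sum_half_pow_sum_le <|
      (Fintype.piFinset fun _ : Fin (2 * n) => range (N + 1)).filter
        fun α => 3 ≤ ∑ i, α i ∧ ∑ i, α i ≤ N
    rw [Fintype.card_fin] at hsum
    rw [← mul_sum]
    calc _ ≤ 1024 * (A * ε) * 2 ^ (2 * n) := by gcongr
      _ = 1024 * 2 ^ (2 * n) * A * ε := by ring

/-- Let `n ≥ 1`, `A > 0`, `N ≥ 3`, and let `M` be positive on positive integers with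
`M(m)^{1/m} ≤ M(N)^{1/N}` for `1 ≤ m ≤ N`.  Let `(c_α)` be complex numbers indexed by
multi-indices `α ∈ ℤ_{≥0}^{2n}` with `3 ≤ |α| ≤ N`, satisfying
`|c_α| ≤ A^{|α|−2}·M(|α|−2)`.  Then there is a constant `C` depending only on `n` such
that for every `ε ∈ (0, 1/(16A)]` and every `r ∈ (0, ε·M(N)^{−1/N}]`, the polynomial
`p(v) = Σ_{3 ≤ |α| ≤ N} c_α·r^{|α|−2}·v^α` satisfies `|D^β p(v)| ≤ C·A·ε` for every
multi-index `β` with `|β| ≤ 2` and every `v ∈ ℂ^{2n}` with `|v_i| ≤ 2`.  (The formal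
derivative `D^β p` is written out explicitly via descending factorials.) -/
theorem taylor_tail_C2_bound (n : ℕ) (hn : 1 ≤ n) :
    ∃ C > (0 : ℝ),
      ∀ (A : ℝ), 0 < A →
      ∀ (N : ℕ), 3 ≤ N →
      ∀ (M : ℕ → ℝ), (∀ m : ℕ, 1 ≤ m → 0 < M m) →
      (∀ m : ℕ, 1 ≤ m → m ≤ N → (M m) ^ (1 / (m : ℝ)) ≤ (M N) ^ (1 / (N : ℝ))) →
      ∀ (c : (Fin (2 * n) → ℕ) → ℂ),
      (∀ α : Fin (2 * n) → ℕ, 3 ≤ ∑ i, α i → ∑ i, α i ≤ N →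
        ‖c α‖ ≤ A ^ ((∑ i, α i) - 2) * M ((∑ i, α i) - 2)) →
      ∀ ε : ℝ, 0 < ε → ε ≤ 1 / (16 * A) →
      ∀ r : ℝ, 0 < r → r ≤ ε * (M N) ^ (-(1 / (N : ℝ))) →
      ∀ β : Fin (2 * n) → ℕ, (∑ i, β i) ≤ 2 →
      ∀ v : Fin (2 * n) → ℂ, (∀ i, ‖v i‖ ≤ 2) →
      ‖(∑ α ∈ (Fintype.piFinset fun _ : Fin (2 * n) => Finset.range (N + 1)) |>.filter
            (fun α => 3 ≤ ∑ i, α i ∧ ∑ i, α i ≤ N),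
          if ∀ i, β i ≤ α i then
            c α * (r : ℂ) ^ ((∑ i, α i) - 2) *
              (∏ i, (Nat.descFactorial (α i) (β i) : ℂ)) *
              ∏ i, (v i) ^ (α i - β i)
          else 0)‖ ≤ C * A * ε :=
  taylor_tail_C2_bound_general n
end

section
/- Let n ≥ 1, A > 0, B > 0, and let N ≥ 3 be an integer. Let M be a positive function defined on the positive integers satisfying M(m)^{1/m} ≤ M(N)^{1/N} for every integer 1 ≤ m ≤ N. Let (c_α) be complex numbers indexed by multi-indices α ∈ ℤ_{≥0}^{2n} with 2 ≤ |α| ≤ N, satisfying |c_α| ≤ A^{|α|−2}·M(|α|−2) for 3 ≤ |α| ≤ N and |c_α| ≤ B for |α| = 2. Then there exists a constant C depending only on n such that for every ε ∈ (0, 1/(8A)], every r ∈ (0, ε·M(N)^{−1/N}], the polynomial p(v) = Σ_{2 ≤ |α| ≤ N} c_α·r^{|α|−2}·v^α in 2n variables satisfies |D^β p(v)|/β! ≤ C·(B + 1) for every multi-index β ∈ ℤ_{≥0}^{2n} and every v ∈ ℂ^{2n} with |v_i| ≤ 1 for all i. -/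
/-!
The rescaling makes the coefficients geometrically small: with `k = |α| - 2`,
`|c_α| r^k ≤ (A ε)^k · M(k) M(N)^{-k/N} ≤ 8^{-k}`, since `M(k)^{1/k} ≤ M(N)^{1/N}`.
Formal differentiation costs at most `α_i.descFactorial β_i ≤ 2^{α_i} β_i!` per variable, so the
`α`-th term of `D^β p(v)` is at most `64 (B + 1) β! 4^{-|α|}`, and the geometric series in each of
the `2n` variables gives `C = 64 (4/3)^{2n}`.
-/

open Finset Nat

lemma Nat.descFactorial_le_two_pow_mul_factorial (a b : ℕ) :
    a.descFactorial b ≤ 2 ^ a * b ! := by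
  rw [descFactorial_eq_factorial_mul_choose, mul_comm]
  exact Nat.mul_le_mul_right _ (choose_le_two_pow a b)

lemma Real.mul_rpow_neg_one_div_pow_le_one {a b : ℝ} {k N : ℕ} (ha : 0 ≤ a) (hb : 0 < b)
    (hk : k ≠ 0) (h : a ^ (1 / (k : ℝ)) ≤ b ^ (1 / (N : ℝ))) :
    a * (b ^ (-(1 / (N : ℝ)))) ^ k ≤ 1 := by
  have ha_le : a ≤ (b ^ (1 / (N : ℝ))) ^ k := by
    calc a = (a ^ ((k : ℝ)⁻¹)) ^ k := (Real.rpow_inv_natCast_pow ha hk).symm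
      _ ≤ (b ^ (1 / (N : ℝ))) ^ k := by
        rw [← one_div]; exact pow_le_pow_left₀ (by positivity) h k
  rw [Real.rpow_neg hb.le, inv_pow, ← div_eq_mul_inv]
  exact div_le_one_of_le₀ ha_le (by positivity)

lemma mul_pow_le_pow_of_le_pow_mul {x A a ε ρ r q : ℝ} {k : ℕ} (hA : 0 ≤ A) (ha : 0 ≤ a)
    (hε : 0 ≤ ε) (hρ : 0 ≤ ρ) (hr : 0 ≤ r) (hx : x ≤ A ^ k * a) (hrε : r ≤ ε * ρ)
    (hAε : A * ε ≤ q) (haρ : a * ρ ^ k ≤ 1) : x * r ^ k ≤ q ^ k :=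
  calc x * r ^ k ≤ A ^ k * a * (ε * ρ) ^ k := by gcongr
    _ = (A * ε) ^ k * (a * ρ ^ k) := by ring
    _ ≤ q ^ k * 1 := by gcongr; exact pow_nonneg ((mul_nonneg hA hε).trans hAε) k
    _ = q ^ k := mul_one _

lemma one_div_eight_pow_sub_two_mul_two_pow {m : ℕ} (hm : 2 ≤ m) :
    (1 / 8 : ℝ) ^ (m - 2) * 2 ^ m = 64 * (1 / 4) ^ m := by
  obtain ⟨k, rfl⟩ := Nat.exists_eq_add_of_le hm
  have h : (1 / 8 : ℝ) ^ k * 2 ^ k = (1 / 4) ^ k := by rw [← mul_pow]; norm_num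
  rw [Nat.add_sub_cancel_left, pow_add, pow_add, ← h]
  ring

section

variable {ι : Type*} [Fintype ι]

lemma norm_descFactorial_mul_pow_le (α β : ι → ℕ) (v : ι → ℂ) (hv : ∀ i, ‖v i‖ ≤ 1) :
    ‖(∏ i, ((α i).descFactorial (β i) : ℂ)) * ∏ i, v i ^ (α i - β i)‖ ≤
      2 ^ (∑ i, α i) * ∏ i, ((β i)! : ℝ) := by
  have hD : ∏ i, ((α i).descFactorial (β i) : ℝ) ≤ ∏ i, (2 ^ α i * ((β i)! : ℝ)) :=
    prod_le_prod (fun _ _ => by positivity)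
      fun i _ => by exact_mod_cast (α i).descFactorial_le_two_pow_mul_factorial (β i)
  have hV : ∏ i, ‖v i‖ ^ (α i - β i) ≤ 1 :=
    prod_le_one (fun _ _ => by positivity) fun i _ => pow_le_one₀ (norm_nonneg _) (hv i)
  rw [norm_mul, norm_prod, norm_prod]
  simp only [Complex.norm_natCast, norm_pow]
  calc (∏ i, ((α i).descFactorial (β i) : ℝ)) * ∏ i, ‖v i‖ ^ (α i - β i)
      ≤ (∏ i, (2 ^ α i * ((β i)! : ℝ))) * 1 := by gcongr
    _ = 2 ^ (∑ i, α i) * ∏ i, ((β i)! : ℝ) := by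
      rw [mul_one, prod_mul_distrib, prod_pow_eq_pow_sum]

lemma sum_piFinset_range_pow_sum_le [DecidableEq ι] {q : ℝ} (hq : 0 ≤ q) (hq1 : q < 1) (K : ℕ) :
    ∑ α ∈ Fintype.piFinset (fun _ : ι => range K), q ^ (∑ i, α i) ≤
      (1 - q)⁻¹ ^ Fintype.card ι := by
  simp_rw [← prod_pow_eq_pow_sum]
  rw [sum_prod_piFinset (range K) fun _ j => q ^ j, prod_const, Finset.card_univ]
  gcongr
  calc ∑ j ∈ range K, q ^ j = ∑ j ∈ Ico 0 K, q ^ j := by rw [range_eq_Ico]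
    _ ≤ q ^ 0 / (1 - q) := geom_sum_Ico_le_of_lt_one hq hq1
    _ = (1 - q)⁻¹ := by rw [pow_zero, one_div]

lemma norm_ite_mul_descFactorial_mul_pow_le {a : ℂ} {s : ℝ} (ha : ‖a‖ ≤ s)
    (α β : ι → ℕ) [Decidable (∀ i, β i ≤ α i)] (v : ι → ℂ) (hv : ∀ i, ‖v i‖ ≤ 1) :
    ‖if ∀ i, β i ≤ α i then
        a * (∏ i, ((α i).descFactorial (β i) : ℂ)) * ∏ i, v i ^ (α i - β i)
      else 0‖ ≤ s * 2 ^ (∑ i, α i) * ∏ i, ((β i)! : ℝ) := by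
  have hs : 0 ≤ s := (norm_nonneg a).trans ha
  split_ifs
  · rw [mul_assoc, norm_mul, mul_assoc]
    exact mul_le_mul ha (norm_descFactorial_mul_pow_le α β v hv) (norm_nonneg _) hs
  · rw [norm_zero]
    positivity

end

lemma mul_pow_le_one_div_eight_pow {A ε r a b x : ℝ} {k N : ℕ} (hA : 0 < A) (hε : 0 ≤ ε)
    (hεA : ε ≤ 1 / (8 * A)) (hr : 0 ≤ r) (hrε : r ≤ ε * b ^ (-(1 / (N : ℝ)))) (ha : 0 ≤ a)
    (hb : 0 < b) (hk : k ≠ 0) (hab : a ^ (1 / (k : ℝ)) ≤ b ^ (1 / (N : ℝ)))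
    (hx : x ≤ A ^ k * a) : x * r ^ k ≤ (1 / 8) ^ k := by
  have hAε : A * ε ≤ 1 / 8 := by
    rw [le_div_iff₀ (by positivity)] at hεA
    linarith
  exact mul_pow_le_pow_of_le_pow_mul hA.le ha hε (Real.rpow_nonneg hb.le _) hr hx hrε hAε
    (Real.mul_rpow_neg_one_div_pow_le_one ha hb hk hab)

lemma norm_mul_pow_sub_two_le {A B ε r : ℝ} {N m : ℕ} {M : ℕ → ℝ} {z : ℂ} (hA : 0 < A)
    (hB : 0 ≤ B) (hε : 0 ≤ ε) (hεA : ε ≤ 1 / (8 * A)) (hr : 0 ≤ r)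
    (hrε : r ≤ ε * M N ^ (-(1 / (N : ℝ)))) (hM : ∀ k : ℕ, 1 ≤ k → 0 < M k)
    (hmono : ∀ k : ℕ, 1 ≤ k → k ≤ N → M k ^ (1 / (k : ℝ)) ≤ M N ^ (1 / (N : ℝ)))
    (hm : 2 ≤ m) (hmN : m ≤ N) (hz : 3 ≤ m → ‖z‖ ≤ A ^ (m - 2) * M (m - 2))
    (hz2 : m = 2 → ‖z‖ ≤ B) :
    ‖z * (r : ℂ) ^ (m - 2)‖ ≤ (B + 1) * (1 / 8) ^ (m - 2) := by
  rw [norm_mul, norm_pow, Complex.norm_real, Real.norm_of_nonneg hr]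
  rcases hm.eq_or_lt with rfl | hm3
  · simp only [Nat.sub_self, pow_zero, mul_one]
    linarith [hz2 rfl]
  · calc _ ≤ (1 / 8 : ℝ) ^ (m - 2) :=
          mul_pow_le_one_div_eight_pow hA hε hεA hr hrε (hM _ (by omega)).le (hM N (by omega))
            (by omega) (hmono _ (by omega) (by omega)) (hz hm3)
      _ ≤ _ := le_mul_of_one_le_left (by positivity) (by linarith)

theorem taylor_polynomial_uniformly_analytic_general (n : ℕ) :
    ∃ C > (0 : ℝ),
      ∀ (A B : ℝ), 0 < A → 0 < B →
      ∀ (N : ℕ), 3 ≤ N →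
      ∀ (M : ℕ → ℝ), (∀ m : ℕ, 1 ≤ m → 0 < M m) →
      (∀ m : ℕ, 1 ≤ m → m ≤ N → (M m) ^ (1 / (m : ℝ)) ≤ (M N) ^ (1 / (N : ℝ))) →
      ∀ (c : (Fin (2 * n) → ℕ) → ℂ),
      (∀ α : Fin (2 * n) → ℕ, 3 ≤ ∑ i, α i → ∑ i, α i ≤ N →
        ‖c α‖ ≤ A ^ ((∑ i, α i) - 2) * M ((∑ i, α i) - 2)) →
      (∀ α : Fin (2 * n) → ℕ, (∑ i, α i) = 2 → ‖c α‖ ≤ B) →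
      ∀ ε : ℝ, 0 < ε → ε ≤ 1 / (8 * A) →
      ∀ r : ℝ, 0 < r → r ≤ ε * (M N) ^ (-(1 / (N : ℝ))) →
      ∀ β : Fin (2 * n) → ℕ,
      ∀ v : Fin (2 * n) → ℂ, (∀ i, ‖v i‖ ≤ 1) →
      ‖(∑ α ∈ (Fintype.piFinset fun _ : Fin (2 * n) => Finset.range (N + 1)) |>.filter
            (fun α => 2 ≤ ∑ i, α i ∧ ∑ i, α i ≤ N),
          if ∀ i, β i ≤ α i then
            c α * (r : ℂ) ^ ((∑ i, α i) - 2) *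
              (∏ i, (Nat.descFactorial (α i) (β i) : ℂ)) *
              ∏ i, (v i) ^ (α i - β i)
          else 0)‖ / (∏ i, (Nat.factorial (β i) : ℝ)) ≤ C * (B + 1) := by
  refine ⟨64 * (4 / 3) ^ (2 * n), by positivity, ?_⟩
  intro A B hA hB N hN M hM hmono c hc3 hc2 ε hε hεA r hr hrε β v hv
  have hcoeff : ∀ α : Fin (2 * n) → ℕ, 2 ≤ ∑ i, α i → ∑ i, α i ≤ N →
      ‖c α * (r : ℂ) ^ ((∑ i, α i) - 2)‖ ≤ (B + 1) * (1 / 8) ^ ((∑ i, α i) - 2) :=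
    fun α h2 hαN => norm_mul_pow_sub_two_le hA hB.le hε.le hεA hr.le hrε hM hmono h2 hαN
      (hc3 α · hαN) (hc2 α)
  set K := ∏ i, ((β i)! : ℝ)
  rw [div_le_iff₀ (by positivity)]
  calc _ ≤ ∑ α ∈ (Fintype.piFinset fun _ : Fin (2 * n) => range (N + 1)).filter
          (fun α => 2 ≤ ∑ i, α i ∧ ∑ i, α i ≤ N), 64 * (B + 1) * K * (1 / 4) ^ (∑ i, α i) :=
        norm_sum_le_of_le _ fun α hα => by
          obtain ⟨-, h2, hαN⟩ := mem_filter.1 hα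
          refine (norm_ite_mul_descFactorial_mul_pow_le (hcoeff α h2 hαN) α β v hv).trans_eq ?_
          rw [mul_assoc (B + 1), one_div_eight_pow_sub_two_mul_two_pow h2]
          ring
    _ ≤ ∑ α ∈ Fintype.piFinset fun _ : Fin (2 * n) => range (N + 1),
          64 * (B + 1) * K * (1 / 4) ^ (∑ i, α i) :=
        sum_le_sum_of_subset_of_nonneg (filter_subset _ _) fun _ _ _ => by positivity
    _ ≤ 64 * (B + 1) * K * (1 - 1 / 4)⁻¹ ^ Fintype.card (Fin (2 * n)) := by
        rw [← mul_sum]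
        gcongr
        exact sum_piFinset_range_pow_sum_le (by norm_num) (by norm_num) _
    _ = 64 * (4 / 3) ^ (2 * n) * (B + 1) * K := by
        rw [Fintype.card_fin]
        norm_num
        ring

/-- Let `n ≥ 1`, `A, B > 0`, `N ≥ 3`, and let `M` be positive on positive integers with
`M(m)^{1/m} ≤ M(N)^{1/N}` for `1 ≤ m ≤ N`.  Let `(c_α)` be complex numbers indexed by
multi-indices `α ∈ ℤ_{≥0}^{2n}` with `2 ≤ |α| ≤ N`, satisfying
`|c_α| ≤ A^{|α|−2}·M(|α|−2)` for `3 ≤ |α| ≤ N` and `|c_α| ≤ B` for `|α| = 2`.  Then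
there is a constant `C` depending only on `n` such that for every `ε ∈ (0, 1/(8A)]` and
every `r ∈ (0, ε·M(N)^{−1/N}]`, the polynomial
`p(v) = Σ_{2 ≤ |α| ≤ N} c_α·r^{|α|−2}·v^α` satisfies `|D^β p(v)|/β! ≤ C·(B + 1)` for
every multi-index `β` and every `v ∈ ℂ^{2n}` with `|v_i| ≤ 1`.  (The formal derivative
`D^β p` is written out explicitly via descending factorials.) -/
theorem taylor_polynomial_uniformly_analytic (n : ℕ) (hn : 1 ≤ n) :
    ∃ C > (0 : ℝ),
      ∀ (A B : ℝ), 0 < A → 0 < B →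
      ∀ (N : ℕ), 3 ≤ N →
      ∀ (M : ℕ → ℝ), (∀ m : ℕ, 1 ≤ m → 0 < M m) →
      (∀ m : ℕ, 1 ≤ m → m ≤ N → (M m) ^ (1 / (m : ℝ)) ≤ (M N) ^ (1 / (N : ℝ))) →
      ∀ (c : (Fin (2 * n) → ℕ) → ℂ),
      (∀ α : Fin (2 * n) → ℕ, 3 ≤ ∑ i, α i → ∑ i, α i ≤ N →
        ‖c α‖ ≤ A ^ ((∑ i, α i) - 2) * M ((∑ i, α i) - 2)) →
      (∀ α : Fin (2 * n) → ℕ, (∑ i, α i) = 2 → ‖c α‖ ≤ B) →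
      ∀ ε : ℝ, 0 < ε → ε ≤ 1 / (8 * A) →
      ∀ r : ℝ, 0 < r → r ≤ ε * (M N) ^ (-(1 / (N : ℝ))) →
      ∀ β : Fin (2 * n) → ℕ,
      ∀ v : Fin (2 * n) → ℂ, (∀ i, ‖v i‖ ≤ 1) →
      ‖(∑ α ∈ (Fintype.piFinset fun _ : Fin (2 * n) => Finset.range (N + 1)) |>.filter
            (fun α => 2 ≤ ∑ i, α i ∧ ∑ i, α i ≤ N),
          if ∀ i, β i ≤ α i then
            c α * (r : ℂ) ^ ((∑ i, α i) - 2) *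
              (∏ i, (Nat.descFactorial (α i) (β i) : ℂ)) *
              ∏ i, (v i) ^ (α i - β i)
          else 0)‖ / (∏ i, (Nat.factorial (β i) : ℝ)) ≤ C * (B + 1) :=
  taylor_polynomial_uniformly_analytic_general n
end
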